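/- arXiv:2505.13432 — 4 statements merged into one kernel-verified Lean document; each statement's English description precedes it below -/
import Mathlib

section
/- Let m, N be positive integers and let S_1,…,S_{m+1}, S̃_1,…,S̃_N be i.i.d. real-valued random variables with a common continuous distribution. For r ∈ {1,…,m+1} define R_r = min{τ ∈ {1,…,N+1} : S̃_{(τ)} ≥ S_{(r)}}, with the convention R_r = N+1 if S_{(r)} > S̃_{(N)}, where S_{(r)} is the r-th order statistic of S_1,…,S_{m+1} and S̃_{(τ)} the τ-th order statistic of S̃_1,…,S̃_N. Then the random vector (R_1,…,R_{m+1}) is uniformly distributed on the set {(ζ_1,…,ζ_{m+1}) ∈ {1,…,N+1}^{m+1} : ζ_1 ≤ ζ_2 ≤ … ≤ ζ_{m+1}}. -/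
open MeasureTheory ProbabilityTheory Finset

noncomputable section

/-- The `r`-th order statistic (0-indexed) of a finite tuple of reals: the values
sorted in increasing order. -/
def orderStat {n : ℕ} (f : Fin n → ℝ) : Fin n → ℝ := f ∘ Tuple.sort f

/-- The probability mass function `p_{m,N,r}(k)` of the `r`-th order statistic of a
sample of size `m+1` drawn without replacement from a population of size `N+m+1`. -/
def pWindow (m N r k : ℕ) : ℝ :=
  (((k + r - 2).choose (r - 1) * (N + m + 2 - k - r).choose (m + 1 - r) : ℕ) : ℝ) /
    (((N + m + 1).choose (m + 1) : ℕ) : ℝ)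

/-- `F_{m,N,r}(t) = Σ_{k=1}^t p_{m,N,r}(k)`, with `F(0) = 0`. -/
def Fwindow (m N r t : ℕ) : ℝ := ∑ k ∈ Finset.Icc 1 t, pWindow m N r k

/-- `R_r^- = max {t ∈ {1,…,N+1} : F_{m,N,r}(t-1) ≤ β/2}`. -/
def Rminus (m N : ℕ) (β : ℝ) (r : ℕ) : ℕ :=
  sSup {t | t ∈ Finset.Icc 1 (N + 1) ∧ Fwindow m N r (t - 1) ≤ β / 2}

/-- `R_r^+ = min {t ∈ {1,…,N+1} : F_{m,N,r}(t) ≥ 1 - β/2}`. -/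
def Rplus (m N : ℕ) (β : ℝ) (r : ℕ) : ℕ :=
  sInf {t | t ∈ Finset.Icc 1 (N + 1) ∧ 1 - β / 2 ≤ Fwindow m N r t}

/-- `S̃_{(t)}`, the `t`-th smallest synthetic score for `t ∈ {1,…,N}`, with the
convention `S̃_{(N+1)} = +∞` (value in `EReal`). -/
def synthSorted (N : ℕ) (g : Fin N → ℝ) (t : ℕ) : EReal :=
  if h : 1 ≤ t ∧ t ≤ N then ((orderStat g ⟨t - 1, by omega⟩ : ℝ) : EReal) else ⊤

/-- The lower window endpoint `L_m(r) = S̃_{(R_r^-)}`. -/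
def windowLo (m N : ℕ) (β : ℝ) (g : Fin N → ℝ) (r : ℕ) : EReal :=
  synthSorted N g (Rminus m N β r)

/-- The upper window endpoint `U_m(r) = S̃_{(R_r^+)}`. -/
def windowHi (m N : ℕ) (β : ℝ) (g : Fin N → ℝ) (r : ℕ) : EReal :=
  synthSorted N g (Rplus m N β r)

/-- The rank `r_η = 1 + #{i : S_i < η}` of `η` among the real calibration scores. -/
def rankOf (m : ℕ) (S : Fin m → ℝ) (η : ℝ) : ℕ :=
  1 + (Finset.univ.filter fun i => S i < η).card

/-- The lower nearest neighbor `NN_m^-(r,η)`: the largest synthetic order statistic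
`S̃_{(j)}` with `R_r^- ≤ j ≤ R_r^+` and `S̃_{(j)} ≤ η`. -/
def NNminus (m N : ℕ) (β : ℝ) (g : Fin N → ℝ) (r : ℕ) (η : ℝ) : EReal :=
  sSup {x : EReal | ∃ j : ℕ, Rminus m N β r ≤ j ∧ j ≤ Rplus m N β r ∧
    x = synthSorted N g j ∧ x ≤ (η : EReal)}

/-- The score transporter `T`. -/
def transport (m N : ℕ) (β : ℝ) (S : Fin m → ℝ) (g : Fin N → ℝ) (η : ℝ) : EReal :=
  if windowHi m N β g (rankOf m S η) ≤ (η : EReal) then windowHi m N β g (rankOf m S η)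
  else if windowLo m N β g (rankOf m S η) ≤ (η : EReal) then NNminus m N β g (rankOf m S η) η
  else windowLo m N β g (rankOf m S η)

/-- The quantile index `⌈(1-α)(N+1)⌉`. -/
def qIdx (N : ℕ) (α : ℝ) : ℕ := ⌈(1 - α) * ((N : ℝ) + 1)⌉₊

/-- `Q̃_{1-α}`, the `⌈(1-α)(N+1)⌉`-th smallest synthetic score (`+∞` if the index is `N+1`). -/
def synthQuantile (N : ℕ) (g : Fin N → ℝ) (α : ℝ) : EReal := synthSorted N g (qIdx N α)

/-- `S_{(t)}` for the real calibration scores, `t ∈ {1,…,m}`, with the conventions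
`S_{(m+1)} = +∞` and `-∞` for out-of-range indices (e.g. an empty maximum). -/
def realSorted (m : ℕ) (S : Fin m → ℝ) (t : ℕ) : EReal :=
  if h : 1 ≤ t ∧ t ≤ m then ((orderStat S ⟨t - 1, by omega⟩ : ℝ) : EReal)
  else if t = m + 1 then ⊤ else ⊥

/-- Total variation distance between two (probability) measures on `ℝ`. -/
def tvDist (μ ν : Measure ℝ) : ℝ :=
  ⨆ A : {s : Set ℝ // MeasurableSet s}, |(μ A.1).toReal - (ν A.1).toReal|

/-- The law of the `i`-th order statistic of `n` i.i.d. draws from `P`. -/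
def orderStatLaw (n : ℕ) (P : Measure ℝ) (i : Fin n) : Measure ℝ :=
  (Measure.pi fun _ : Fin n => P).map fun f => orderStat f i

end

/-- The finite set of nondecreasing tuples `(ζ_1,…,ζ_{m+1})` with values in `{1,…,N+1}`. -/
noncomputable def monoTuples (m N : ℕ) : Finset (Fin (m + 1) → ℕ) :=
  @Finset.filter _ (fun ζ => Monotone ζ) (Classical.decPred _)
    (Fintype.piFinset fun _ : Fin (m + 1) => Finset.Icc 1 (N + 1))

/-- The rank `R_r = min{τ ∈ {1,…,N+1} : S̃_{(τ)} ≥ S_{(r)}}` (with `S̃_{(N+1)} = +∞`,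
so `R_r = N+1` when `S_{(r)}` exceeds all synthetic scores). -/
noncomputable def synthRank (N : ℕ) (g : Fin N → ℝ) (x : ℝ) : ℕ :=
  sInf {τ | τ ∈ Finset.Icc 1 (N + 1) ∧ (x : EReal) ≤ synthSorted N g τ}

namespace RankAux

open Finset

variable {n : ℕ}

lemma range_orderStat (f : Fin n → ℝ) : Set.range (orderStat f) = Set.range f := by
  unfold orderStat
  rw [Set.range_comp, Equiv.range_eq_univ, Set.image_univ]

lemma injective_orderStat {f : Fin n → ℝ} (hf : Function.Injective f) :
    Function.Injective (orderStat f) := hf.comp (Equiv.injective _)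

lemma strictMono_orderStat {f : Fin n → ℝ} (hf : Function.Injective f) :
    StrictMono (orderStat f) :=
  (Tuple.monotone_sort f).strictMono_of_injective (injective_orderStat hf)

lemma orderStat_unique {f h : Fin n → ℝ} (hf : Function.Injective f) (hh : StrictMono h)
    (hr : Set.range h = Set.range f) : h = orderStat f := by
  have hcard : (univ.image f).card = n := by
    rw [card_image_of_injective _ hf, card_univ, Fintype.card_fin]
  have h1 : ∀ i, h i ∈ univ.image f := by
    intro i
    have : h i ∈ Set.range f := hr ▸ Set.mem_range_self i
    obtain ⟨j, hj⟩ := this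
    exact mem_image.mpr ⟨j, mem_univ j, hj⟩
  have h2 : ∀ i, orderStat f i ∈ univ.image f := by
    intro i
    have : orderStat f i ∈ Set.range f := range_orderStat f ▸ Set.mem_range_self i
    obtain ⟨j, hj⟩ := this
    exact mem_image.mpr ⟨j, mem_univ j, hj⟩
  rw [Finset.orderEmbOfFin_unique hcard h1 hh,
    Finset.orderEmbOfFin_unique hcard h2 (strictMono_orderStat hf)]

lemma mem_iff_lt_card_of_lower (S : Finset (Fin n))
    (hS : ∀ j k : Fin n, j ≤ k → k ∈ S → j ∈ S) (k : Fin n) :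
    k ∈ S ↔ (k : ℕ) < S.card := by
  constructor
  · intro hk
    have hsub : Finset.Iic k ⊆ S := fun j hj => hS j k (Finset.mem_Iic.mp hj) hk
    have := Finset.card_le_card hsub
    rw [Fin.card_Iic] at this
    omega
  · intro hk
    by_contra hns
    have hsub : S ⊆ Finset.Iio k := by
      intro j hj
      rw [Finset.mem_Iio]
      by_contra hjk
      exact hns (hS k j (not_lt.mp hjk) hj)
    have := Finset.card_le_card hsub
    rw [Fin.card_Iio] at this
    omega

lemma card_filter_comp_equiv {γ δ : Type*} [Fintype γ] [Fintype δ]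
    (e : γ ≃ δ) (P : δ → Prop) [DecidablePred P] :
    (univ.filter fun c => P (e c)).card = (univ.filter P).card := by
  apply Finset.card_equiv e
  intro c
  simp

lemma card_filter_lt_orderStat (f : Fin n → ℝ) (x : ℝ) :
    (univ.filter fun i => orderStat f i < x).card = (univ.filter fun i => f i < x).card := by
  unfold orderStat
  exact card_filter_comp_equiv (Tuple.sort f) (fun i => f i < x)

lemma orderStat_lt_iff {f : Fin n → ℝ} (hf : Function.Injective f) (x : ℝ) (k : Fin n) :
    orderStat f k < x ↔ (k : ℕ) < (univ.filter fun i => f i < x).card := by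
  rw [← card_filter_lt_orderStat f x]
  have hmem : k ∈ (univ.filter fun i => orderStat f i < x) ↔ orderStat f k < x := by simp
  rw [← hmem]
  apply mem_iff_lt_card_of_lower
  intro j k' hjk hk'
  simp only [mem_filter, mem_univ, true_and] at hk' ⊢
  exact lt_of_le_of_lt (((strictMono_orderStat hf).monotone) hjk) hk'

lemma le_orderStat_iff {f : Fin n → ℝ} (hf : Function.Injective f) (x : ℝ) (k : Fin n) :
    x ≤ orderStat f k ↔ (univ.filter fun i => f i < x).card ≤ (k : ℕ) := by
  rw [← not_lt, orderStat_lt_iff hf, not_lt]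

lemma synthRank_eq {N : ℕ} {g : Fin N → ℝ} (hg : Function.Injective g) (x : ℝ) :
    synthRank N g x = (univ.filter fun j => g j < x).card + 1 := by
  set c := (univ.filter fun j => g j < x).card with hc
  have hcN : c ≤ N := by
    calc c ≤ (univ : Finset (Fin N)).card := Finset.card_filter_le _ _
    _ = N := by simp
  have key : ∀ τ : ℕ, (τ ∈ Finset.Icc 1 (N + 1) ∧ ((x : EReal) ≤ synthSorted N g τ)) ↔
      (c + 1 ≤ τ ∧ τ ≤ N + 1) := by
    intro τ
    rw [Finset.mem_Icc]
    constructor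
    · rintro ⟨⟨h1, h2⟩, hle⟩
      refine ⟨?_, h2⟩
      by_contra hlt
      push_neg at hlt
      have hτN : τ ≤ N := by omega
      rw [synthSorted, dif_pos ⟨h1, hτN⟩] at hle
      rw [EReal.coe_le_coe_iff] at hle
      rw [le_orderStat_iff hg] at hle
      simp only at hle
      omega
    · rintro ⟨h1, h2⟩
      have hτ1 : 1 ≤ τ := by omega
      refine ⟨⟨hτ1, h2⟩, ?_⟩
      by_cases hτN : τ ≤ N
      · rw [synthSorted, dif_pos ⟨hτ1, hτN⟩, EReal.coe_le_coe_iff, le_orderStat_iff hg]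
        simp only
        omega
      · rw [synthSorted, dif_neg (by omega)]
        exact le_top
  have hmem : c + 1 ∈ {τ | τ ∈ Finset.Icc 1 (N + 1) ∧ (x : EReal) ≤ synthSorted N g τ} :=
    (key (c + 1)).mpr ⟨le_refl _, by omega⟩
  apply le_antisymm (Nat.sInf_le hmem)
  have hne : {τ | τ ∈ Finset.Icc 1 (N + 1) ∧ (x : EReal) ≤ synthSorted N g τ}.Nonempty :=
    ⟨c + 1, hmem⟩
  have := Nat.sInf_mem hne
  exact ((key _).mp this).1

lemma card_filter_sum {α β : Type*} [Fintype α] [Fintype β] (P : α ⊕ β → Prop) [DecidablePred P] :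
    (univ.filter P).card
      = (univ.filter fun a => P (Sum.inl a)).card + (univ.filter fun b => P (Sum.inr b)).card := by
  rw [← Finset.card_disjSum]
  congr 1
  ext x
  cases x <;> simp

lemma strictMono_add_le {k : ℕ} {q : Fin k → ℕ} (hq : StrictMono q) :
    ∀ (d : ℕ) (a b : Fin k), (b : ℕ) = (a : ℕ) + d → q a + d ≤ q b := by
  intro d
  induction d with
  | zero => intro a b h; have hab : a = b := Fin.ext (by omega); subst hab; omega
  | succ d ih =>
    intro a b h
    have hb' : ((a : ℕ) + d) < k := by omega
    have h1 : q a + d ≤ q ⟨(a : ℕ) + d, hb'⟩ := ih a _ rfl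
    have h2 : q ⟨(a : ℕ) + d, hb'⟩ < q b := hq (by simp [Fin.lt_def]; omega)
    omega

variable {m N : ℕ}

def Pfin (e : Fin (m + 1 + N) ≃ (Fin (m + 1) ⊕ Fin N)) : Finset (Fin (m + 1 + N)) :=
  univ.image fun i : Fin (m + 1) => e.symm (Sum.inl i)

lemma card_Pfin (e : Fin (m + 1 + N) ≃ (Fin (m + 1) ⊕ Fin N)) : (Pfin e).card = m + 1 := by
  have hinj : Function.Injective (fun i : Fin (m + 1) => e.symm (Sum.inl i)) :=
    fun a b hab => Sum.inl_injective (e.symm.injective hab)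
  rw [Pfin, card_image_of_injective _ hinj]
  simp

def pemb (e : Fin (m + 1 + N) ≃ (Fin (m + 1) ⊕ Fin N)) : Fin (m + 1) ↪o Fin (m + 1 + N) :=
  (Pfin e).orderEmbOfFin (card_Pfin e)

def zeta (e : Fin (m + 1 + N) ≃ (Fin (m + 1) ⊕ Fin N)) : Fin (m + 1) → ℕ :=
  fun r => ((pemb e r : ℕ) - (r : ℕ)) + 1

lemma strictMono_pemb_val (e : Fin (m + 1 + N) ≃ (Fin (m + 1) ⊕ Fin N)) :
    StrictMono fun r => ((pemb e r : ℕ)) := fun _ _ h => (pemb e).strictMono h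

lemma pemb_val_ge (e : Fin (m + 1 + N) ≃ (Fin (m + 1) ⊕ Fin N)) (r : Fin (m + 1)) :
    (r : ℕ) ≤ (pemb e r : ℕ) := by
  have := strictMono_add_le (strictMono_pemb_val e) (r : ℕ) ⟨0, by omega⟩ r (by simp)
  omega

lemma coePfin (e : Fin (m + 1 + N) ≃ (Fin (m + 1) ⊕ Fin N)) :
    (↑(Pfin e) : Set (Fin (m + 1 + N))) = Set.range (fun i : Fin (m+1) => e.symm (Sum.inl i)) := by
  rw [Pfin, coe_image, coe_univ, Set.image_univ]

/-- Main deterministic lemma. -/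
lemma rank_eq_zeta {x : Fin (m + 1) ⊕ Fin N → ℝ}
    (e : Fin (m + 1 + N) ≃ (Fin (m + 1) ⊕ Fin N)) (hx : StrictMono (x ∘ e)) (r : Fin (m + 1)) :
    synthRank N (fun j => x (Sum.inr j)) (orderStat (fun i => x (Sum.inl i)) r) = zeta e r := by
  have hxinj : Function.Injective x := by
    intro a b hab
    have := hx.injective (a₁ := e.symm a) (a₂ := e.symm b)
      (by simp only [Function.comp_apply, Equiv.apply_symm_apply]; exact hab)
    have := congrArg e this
    simpa using this
  set f : Fin (m + 1) → ℝ := fun i => x (Sum.inl i) with hf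
  set g : Fin N → ℝ := fun j => x (Sum.inr j) with hgdef
  have hfinj : Function.Injective f := fun a b hab => Sum.inl_injective (hxinj hab)
  have hginj : Function.Injective g := fun a b hab => Sum.inr_injective (hxinj hab)
  set h : Fin (m + 1) → ℝ := fun r => x (e (pemb e r)) with hh
  have hhsm : StrictMono h := hx.comp (pemb e).strictMono
  have hrange : Set.range h = Set.range f := by
    have h1 : Set.range h = (x ∘ e) '' ↑(Pfin e) := by
      rw [← Finset.range_orderEmbOfFin (Pfin e) (card_Pfin e)]
      rw [← Set.range_comp]
      rfl
    rw [h1, coePfin]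
    rw [← Set.range_comp]
    have : (x ∘ ⇑e) ∘ (fun i : Fin (m+1) => e.symm (Sum.inl i)) = f := by
      funext i
      simp [hf]
    rw [this]
  have hOS : orderStat f = h := (orderStat_unique hfinj hhsm hrange).symm
  -- counting
  set v : ℝ := h r with hv
  have hcount_f : (univ.filter fun i => f i < v).card = (r : ℕ) := by
    rw [← card_filter_lt_orderStat f v, hOS]
    have : (univ.filter fun k => h k < v).card = (univ.filter fun k : Fin (m+1) => k < r).card := by
      congr 1
      apply Finset.filter_congr
      intro k _
      simp only [hv, hhsm.lt_iff_lt]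
    rw [this]
    have : (univ.filter fun k : Fin (m+1) => k < r) = Finset.Iio r := by
      ext k; simp
    rw [this, Fin.card_Iio]
  have hcount_all : (univ.filter fun q : Fin (m+1+N) => x (e q) < v).card = (pemb e r : ℕ) := by
    have : (univ.filter fun q : Fin (m+1+N) => x (e q) < v)
        = (univ.filter fun q : Fin (m+1+N) => q < pemb e r) := by
      apply Finset.filter_congr
      intro q _
      simp only [hv]
      exact ⟨fun hlt => hx.lt_iff_lt.mp hlt, fun hlt => hx hlt⟩
    rw [this]
    have : (univ.filter fun q : Fin (m+1+N) => q < pemb e r) = Finset.Iio (pemb e r) := by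
      ext k; simp
    rw [this, Fin.card_Iio]
  have hsplit : (univ.filter fun q : Fin (m+1+N) => x (e q) < v).card
      = (univ.filter fun i : Fin (m+1) => f i < v).card
        + (univ.filter fun j : Fin N => g j < v).card := by
    rw [card_filter_comp_equiv e (fun i => x i < v)]
    exact card_filter_sum (fun i => x i < v)
  have hcount_g : (univ.filter fun j : Fin N => g j < v).card = (pemb e r : ℕ) - (r : ℕ) := by
    rw [hcount_all, hcount_f] at hsplit
    omega
  rw [hOS]
  rw [synthRank_eq hginj v, hcount_g, zeta]

end RankAux

namespace RankAux
open Finset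

variable {m N : ℕ}


lemma mem_monoTuples {ζ : Fin (m + 1) → ℕ} :
    ζ ∈ monoTuples m N ↔ (∀ r, 1 ≤ ζ r ∧ ζ r ≤ N + 1) ∧ Monotone ζ := by
  rw [monoTuples]
  rw [@Finset.mem_filter _ _ (Classical.decPred _), Fintype.mem_piFinset]
  constructor
  · rintro ⟨h1, h2⟩
    exact ⟨fun r => Finset.mem_Icc.mp (h1 r), h2⟩
  · rintro ⟨h1, h2⟩
    exact ⟨fun r => Finset.mem_Icc.mpr (h1 r), h2⟩

lemma Pfin_eq_image_pemb (e : Fin (m + 1 + N) ≃ (Fin (m + 1) ⊕ Fin N)) :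
    Pfin e = univ.image (fun r => pemb e r) := by
  apply Finset.coe_injective
  rw [coe_image, coe_univ, Set.image_univ]
  exact (Finset.range_orderEmbOfFin _ _).symm

lemma pemb_unique (e : Fin (m + 1 + N) ≃ (Fin (m + 1) ⊕ Fin N))
    {s : Fin (m + 1) → Fin (m + 1 + N)} (hmem : ∀ r, s r ∈ Pfin e) (hsm : StrictMono s) :
    ∀ r, pemb e r = s r := by
  intro r
  rw [Finset.orderEmbOfFin_unique (card_Pfin e) hmem hsm]
  rfl

lemma zeta_eq_iff {e e' : Fin (m + 1 + N) ≃ (Fin (m + 1) ⊕ Fin N)} :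
    zeta e = zeta e' ↔ Pfin e = Pfin e' := by
  constructor
  · intro h
    have hval : ∀ r, (pemb e r : ℕ) = (pemb e' r : ℕ) := by
      intro r
      have h1 := congrFun h r
      have h2 := pemb_val_ge e r
      have h3 := pemb_val_ge e' r
      simp only [zeta] at h1
      omega
    have hp : ∀ r, pemb e r = pemb e' r := fun r => Fin.ext (hval r)
    rw [Pfin_eq_image_pemb, Pfin_eq_image_pemb]
    congr 1
    funext r
    exact hp r
  · intro h
    have : ∀ r, pemb e r = pemb e' r := by
      apply pemb_unique
      · intro r; rw [h]; exact Finset.orderEmbOfFin_mem _ _ _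
      · exact (pemb e').strictMono
    funext r
    simp only [zeta, this r]

lemma zeta_mem (e : Fin (m + 1 + N) ≃ (Fin (m + 1) ⊕ Fin N)) : zeta e ∈ monoTuples m N := by
  have hub : ∀ r : Fin (m + 1), (pemb e r : ℕ) ≤ N + (r : ℕ) := by
    intro r
    have hL : ((⟨m, by omega⟩ : Fin (m + 1)) : ℕ) = (r : ℕ) + (m - (r : ℕ)) := by
      have := r.isLt
      simp only [Fin.val_mk]
      omega
    have h1 := strictMono_add_le (strictMono_pemb_val e) (m - (r : ℕ)) r ⟨m, by omega⟩ hL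
    have h2 : (pemb e ⟨m, by omega⟩ : ℕ) < m + 1 + N := (pemb e _).isLt
    have := r.isLt
    omega
  rw [mem_monoTuples]
  constructor
  · intro r
    have h1 := pemb_val_ge e r
    have h2 := hub r
    simp only [zeta]
    omega
  · intro a b hab
    have hab' : (a : ℕ) ≤ (b : ℕ) := hab
    have h1 := strictMono_add_le (strictMono_pemb_val e) ((b : ℕ) - (a : ℕ)) a b (by omega)
    have h2 := pemb_val_ge e a
    simp only [zeta]
    omega

/-- An equiv with prescribed `Pfin`. -/
lemma exists_equiv_Pfin (A : Finset (Fin (m + 1 + N))) (hA : A.card = m + 1) :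
    ∃ e : Fin (m + 1 + N) ≃ (Fin (m + 1) ⊕ Fin N), Pfin e = A := by
  classical
  have hAc : Aᶜ.card = N := by
    rw [Finset.card_compl, hA]
    simp
  let eA : Fin (m + 1) ≃ {x // x ∈ A} := (finCongr hA.symm).trans A.equivFin.symm
  let eB : Fin N ≃ {x // ¬ x ∈ A} :=
    ((finCongr hAc.symm).trans Aᶜ.equivFin.symm).trans
      (Equiv.subtypeEquivRight (fun x => Finset.mem_compl))
  let eOf : (Fin (m + 1) ⊕ Fin N) ≃ Fin (m + 1 + N) :=
    (Equiv.sumCongr eA eB).trans (Equiv.sumCompl (· ∈ A))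
  refine ⟨eOf.symm, ?_⟩
  have hmem : ∀ i : Fin (m + 1), eOf (Sum.inl i) ∈ A := by
    intro i
    simp only [eOf, Equiv.trans_apply, Equiv.sumCongr_apply, Sum.map_inl, Equiv.sumCompl_apply_inl]
    exact (eA i).2
  have hsub : Pfin eOf.symm ⊆ A := by
    intro y hy
    rw [Pfin, Finset.mem_image] at hy
    obtain ⟨i, _, hi⟩ := hy
    rw [Equiv.symm_symm] at hi
    exact hi ▸ hmem i
  exact Finset.eq_of_subset_of_card_le hsub (by rw [card_Pfin, hA])

lemma exists_zeta_eq {ζ : Fin (m + 1) → ℕ} (hζ : ζ ∈ monoTuples m N) :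
    ∃ e : Fin (m + 1 + N) ≃ (Fin (m + 1) ⊕ Fin N), zeta e = ζ := by
  rw [mem_monoTuples] at hζ
  obtain ⟨hbd', hmono⟩ := hζ
  have hslt : ∀ r : Fin (m + 1), ζ r + (r : ℕ) - 1 < m + 1 + N := by
    intro r
    have h1 := (hbd' r).2
    have h2 := r.isLt
    omega
  set s : Fin (m + 1) → Fin (m + 1 + N) := fun r => ⟨ζ r + (r : ℕ) - 1, hslt r⟩ with hs
  have hsm : StrictMono s := by
    intro a b hab
    have h1 : ζ a ≤ ζ b := hmono hab.le
    have h2 : (a : ℕ) < (b : ℕ) := hab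
    have h3 := (hbd' a).1
    simp only [hs, Fin.mk_lt_mk]
    omega
  have hsinj : Function.Injective s := hsm.injective
  have hcard : (univ.image s).card = m + 1 := by
    rw [card_image_of_injective _ hsinj]; simp
  obtain ⟨e, he⟩ := exists_equiv_Pfin (univ.image s) hcard
  refine ⟨e, ?_⟩
  have hp : ∀ r, pemb e r = s r := by
    apply pemb_unique
    · intro r; rw [he]; exact Finset.mem_image_of_mem s (mem_univ r)
    · exact hsm
  funext r
  have h3 := (hbd' r).1
  simp only [zeta, hp r, hs]
  omega

/-- A permutation mapping `A` onto `B`. -/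
lemma exists_perm_image (A B : Finset (Fin (m + 1 + N))) (hAB : A.card = B.card) :
    ∃ τ : Equiv.Perm (Fin (m + 1 + N)), ∀ y, y ∈ A ↔ τ y ∈ B := by
  classical
  have hc : Aᶜ.card = Bᶜ.card := by rw [Finset.card_compl, Finset.card_compl, hAB]
  let eAB : {x // x ∈ A} ≃ {x // x ∈ B} :=
    A.equivFin.trans ((finCongr hAB).trans B.equivFin.symm)
  let eAB' : {x // ¬ x ∈ A} ≃ {x // ¬ x ∈ B} :=
    ((Equiv.subtypeEquivRight (fun x => Finset.mem_compl)).symm.trans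
      (Aᶜ.equivFin.trans ((finCongr hc).trans Bᶜ.equivFin.symm))).trans
      (Equiv.subtypeEquivRight (fun x => Finset.mem_compl))
  refine ⟨(Equiv.sumCompl (· ∈ A)).symm.trans
    ((eAB.sumCongr eAB').trans (Equiv.sumCompl (· ∈ B))), fun y => ?_⟩
  by_cases hy : y ∈ A
  · simp only [Equiv.trans_apply, Equiv.sumCompl_symm_apply_of_pos hy, Equiv.sumCongr_apply,
      Sum.map_inl, Equiv.sumCompl_apply_inl]
    exact ⟨fun _ => (eAB ⟨y, hy⟩).2, fun _ => hy⟩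
  · simp only [Equiv.trans_apply, Equiv.sumCompl_symm_apply_of_neg hy, Equiv.sumCongr_apply,
      Sum.map_inr, Equiv.sumCompl_apply_inr]
    exact ⟨fun h => absurd h hy, fun h => absurd h (eAB' ⟨y, hy⟩).2⟩

lemma Pfin_perm_trans (σ : Equiv.Perm (Fin (m + 1 + N)))
    (e : Fin (m + 1 + N) ≃ (Fin (m + 1) ⊕ Fin N)) :
    Pfin (σ.trans e) = (Pfin e).image ⇑σ.symm := by
  rw [Pfin, Pfin, Finset.image_image]
  rfl

lemma image_perm_eq {A B : Finset (Fin (m + 1 + N))} {τ : Equiv.Perm (Fin (m + 1 + N))}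
    (hAB : A.card = B.card) (h : ∀ y, y ∈ A ↔ τ y ∈ B) : A.image ⇑τ = B := by
  apply Finset.eq_of_subset_of_card_le
  · intro z hz
    rw [Finset.mem_image] at hz
    obtain ⟨y, hy, rfl⟩ := hz
    exact (h y).mp hy
  · rw [card_image_of_injective _ τ.injective, hAB]

lemma card_fiber_eq {ζ ζ' : Fin (m + 1) → ℕ} (hζ : ζ ∈ monoTuples m N)
    (hζ' : ζ' ∈ monoTuples m N) :
    ((univ : Finset (Fin (m + 1 + N) ≃ (Fin (m + 1) ⊕ Fin N))).filter fun e => zeta e = ζ).card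
      = ((univ : Finset (Fin (m + 1 + N) ≃ (Fin (m + 1) ⊕ Fin N))).filter
          fun e => zeta e = ζ').card := by
  classical
  obtain ⟨e0, he0⟩ := exists_zeta_eq hζ
  obtain ⟨e0', he0'⟩ := exists_zeta_eq hζ'
  obtain ⟨τ, hτ⟩ := exists_perm_image (Pfin e0) (Pfin e0') (by rw [card_Pfin, card_Pfin])
  have himg : (Pfin e0).image ⇑τ = Pfin e0' := image_perm_eq (by rw [card_Pfin, card_Pfin]) hτ
  have himg' : (Pfin e0').image ⇑τ.symm = Pfin e0 := by
    apply image_perm_eq (by rw [card_Pfin, card_Pfin])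
    intro y
    constructor
    · intro hy
      rw [← himg] at hy
      rw [Finset.mem_image] at hy
      obtain ⟨z, hz, hzy⟩ := hy
      rwa [← hzy, Equiv.symm_apply_apply]
    · intro hy
      have := (hτ (τ.symm y)).mp hy
      rwa [Equiv.apply_symm_apply] at this
  apply Finset.card_bij' (fun e _ => τ.symm.trans e) (fun e _ => τ.trans e)
  · intro e he
    rw [Finset.mem_filter] at he ⊢
    refine ⟨mem_univ _, ?_⟩
    have h1 : Pfin e = Pfin e0 := zeta_eq_iff.mp (he.2.trans he0.symm)
    have h2 : Pfin (τ.symm.trans e) = Pfin e0' := by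
      rw [Pfin_perm_trans, Equiv.symm_symm, h1, himg]
    exact (zeta_eq_iff.mpr h2).trans he0'
  · intro e he
    rw [Finset.mem_filter] at he ⊢
    refine ⟨mem_univ _, ?_⟩
    have h1 : Pfin e = Pfin e0' := zeta_eq_iff.mp (he.2.trans he0'.symm)
    have h2 : Pfin (τ.trans e) = Pfin e0 := by
      rw [Pfin_perm_trans, h1, himg']
    exact (zeta_eq_iff.mpr h2).trans he0
  · intro e _
    ext y
    simp
  · intro e _
    ext y
    simp
end RankAux

namespace RankAux
open Finset MeasureTheory ProbabilityTheory

variable {m N : ℕ}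

/-- The event that `x ∘ e` is strictly monotone. -/
def Msets (e : Fin (m + 1 + N) ≃ (Fin (m + 1) ⊕ Fin N)) : Set ((Fin (m + 1) ⊕ Fin N) → ℝ) :=
  {x | StrictMono (x ∘ ⇑e)}

lemma measurableSet_Msets (e : Fin (m + 1 + N) ≃ (Fin (m + 1) ⊕ Fin N)) :
    MeasurableSet (Msets e) := by
  have h : Msets e = ⋂ (a : Fin (m + 1 + N)) (b : Fin (m + 1 + N)) (_ : a < b),
      {x : (Fin (m + 1) ⊕ Fin N) → ℝ | x (e a) < x (e b)} := by
    ext x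
    simp only [Set.mem_iInter, Set.mem_setOf_eq, Msets]
    exact ⟨fun h a b hab => h hab, fun h a b hab => h a b hab⟩
  rw [h]
  exact MeasurableSet.iInter fun a => MeasurableSet.iInter fun b => MeasurableSet.iInter fun _ =>
    measurableSet_lt (measurable_pi_apply _) (measurable_pi_apply _)

lemma injective_of_mem_Msets {e : Fin (m + 1 + N) ≃ (Fin (m + 1) ⊕ Fin N)}
    {x : (Fin (m + 1) ⊕ Fin N) → ℝ} (hx : x ∈ Msets e) : Function.Injective x := by
  intro a b hab
  have h := hx.injective (a₁ := e.symm a) (a₂ := e.symm b)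
    (by simp only [Function.comp_apply, Equiv.apply_symm_apply]; exact hab)
  have := congrArg e h
  simpa using this

lemma Msets_disjoint {e e' : Fin (m + 1 + N) ≃ (Fin (m + 1) ⊕ Fin N)} (h : e ≠ e') :
    Msets e ∩ Msets e' = ∅ := by
  by_contra hne
  obtain ⟨x, hx, hx'⟩ := Set.nonempty_iff_ne_empty.mpr hne
  apply h
  have hinj : Function.Injective x := injective_of_mem_Msets hx
  have hcomp : (x ∘ ⇑e) ∘ ⇑(e'.trans e.symm) = x ∘ ⇑e' := by
    funext k
    simp [Function.comp]
  have := Tuple.unique_monotone (f := x ∘ ⇑e) (σ := Equiv.refl _) (τ := e'.trans e.symm)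
    (by simpa using hx.monotone) (by rw [hcomp]; exact hx'.monotone)
  rw [hcomp] at this
  simp only [Equiv.coe_refl, Function.comp_id] at this
  ext k
  have hk := congrFun this k
  simp only [Function.comp_apply] at hk
  exact (hinj hk.symm).symm

lemma exists_mem_Msets {x : (Fin (m + 1) ⊕ Fin N) → ℝ} (hx : Function.Injective x) :
    ∃ e : Fin (m + 1 + N) ≃ (Fin (m + 1) ⊕ Fin N), x ∈ Msets e := by
  have hcard : Fintype.card (Fin (m + 1) ⊕ Fin N) = m + 1 + N := by simp
  let e₀ : Fin (m + 1 + N) ≃ (Fin (m + 1) ⊕ Fin N) := (Fintype.equivFinOfCardEq hcard).symm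
  set f : Fin (m + 1 + N) → ℝ := x ∘ ⇑e₀ with hf
  refine ⟨(Tuple.sort f).trans e₀, ?_⟩
  have : x ∘ ⇑((Tuple.sort f).trans e₀) = f ∘ ⇑(Tuple.sort f) := rfl
  show StrictMono (x ∘ ⇑((Tuple.sort f).trans e₀))
  rw [this]
  apply (Tuple.monotone_sort f).strictMono_of_injective
  exact (hx.comp e₀.injective).comp (Tuple.sort f).injective

lemma measure_Msets_eq (μ : Measure ℝ) [IsProbabilityMeasure μ]
    (e e' : Fin (m + 1 + N) ≃ (Fin (m + 1) ⊕ Fin N)) :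
    Measure.pi (fun _ : Fin (m + 1) ⊕ Fin N => μ) (Msets e)
      = Measure.pi (fun _ : Fin (m + 1) ⊕ Fin N => μ) (Msets e') := by
  set ψ : (Fin (m + 1) ⊕ Fin N) ≃ (Fin (m + 1) ⊕ Fin N) := e'.symm.trans e with hψ
  have hmp : MeasurePreserving
      ((MeasurableEquiv.piCongrLeft (fun _ : Fin (m + 1) ⊕ Fin N => ℝ) ψ).symm)
      (Measure.pi (fun _ : Fin (m + 1) ⊕ Fin N => μ))
      (Measure.pi (fun _ : Fin (m + 1) ⊕ Fin N => μ)) :=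
    (measurePreserving_piCongrLeft (fun _ => μ) ψ).symm _
  have hpre : ((MeasurableEquiv.piCongrLeft (fun _ : Fin (m + 1) ⊕ Fin N => ℝ) ψ).symm) ⁻¹'
      (Msets e') = Msets e := by
    ext x
    have happ : ∀ j, ((MeasurableEquiv.piCongrLeft (fun _ : Fin (m + 1) ⊕ Fin N => ℝ) ψ).symm x) j
        = x (ψ j) := fun j => rfl
    simp only [Set.mem_preimage, Msets, Set.mem_setOf_eq]
    have hcomp : ((MeasurableEquiv.piCongrLeft (fun _ : Fin (m + 1) ⊕ Fin N => ℝ) ψ).symm x)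
        ∘ ⇑e' = x ∘ ⇑e := by
      funext k
      rw [Function.comp_apply, happ]
      simp only [Function.comp_apply, hψ, Equiv.trans_apply, Equiv.symm_apply_apply]
    rw [hcomp]
  rw [← hpre, hmp.measure_preimage (measurableSet_Msets e').nullMeasurableSet]

/-- law of an independent family is the product measure -/
lemma map_pi_of_iIndep {Ω : Type*} [MeasurableSpace Ω] (Pr : Measure Ω) [IsProbabilityMeasure Pr]
    {k : ℕ} (μ : Measure ℝ) [IsProbabilityMeasure μ] (f : Fin k → Ω → ℝ)
    (hmeas : ∀ i, Measurable (f i))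
    (hind : iIndepFun f Pr) (hlaw : ∀ i, Pr.map (f i) = μ) :
    Pr.map (fun ω i => f i ω) = Measure.pi (fun _ : Fin k => μ) := by
  refine (Measure.pi_eq fun s hs => ?_).symm
  rw [Measure.map_apply (measurable_pi_lambda _ hmeas) (MeasurableSet.univ_pi hs)]
  have hpre : (fun ω i => f i ω) ⁻¹' (Set.univ.pi s) = ⋂ i ∈ Finset.univ, f i ⁻¹' s i := by
    ext ω
    simp [Set.mem_univ_pi]
  rw [hpre, hind.measure_inter_preimage_eq_mul Finset.univ (fun i _ => hs i)]
  apply Finset.prod_congr rfl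
  intro i _
  rw [← hlaw i, Measure.map_apply (hmeas i) (hs i)]

lemma indepFun_null {Ω : Type*} [MeasurableSpace Ω] (Pr : Measure Ω) [IsProbabilityMeasure Pr]
    (μ : Measure ℝ) [IsProbabilityMeasure μ] (hcont : ∀ x : ℝ, μ {x} = 0)
    {U V : Ω → ℝ} (hU : Measurable U) (hV : Measurable V) (hUV : IndepFun U V Pr)
    (hlU : Pr.map U = μ) (hlV : Pr.map V = μ) : Pr {ω | U ω = V ω} = 0 := by
  have hd : MeasurableSet {p : ℝ × ℝ | p.1 = p.2} :=
    measurableSet_eq_fun measurable_fst measurable_snd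
  have hset : {ω | U ω = V ω} = (fun ω => (U ω, V ω)) ⁻¹' {p : ℝ × ℝ | p.1 = p.2} := rfl
  rw [hset, ← Measure.map_apply (hU.prodMk hV) hd]
  rw [(indepFun_iff_map_prod_eq_prod_map_map hU.aemeasurable hV.aemeasurable).mp hUV, hlU, hlV]
  rw [Measure.prod_apply hd]
  have hsing : ∀ a : ℝ, (Prod.mk a ⁻¹' {p : ℝ × ℝ | p.1 = p.2}) = {a} := by
    intro a
    ext b
    simp [eq_comm]
  simp_rw [hsing, hcont]
  simp

end RankAux

/-- if all scores are i.i.d. from a common continuous distribution, the rank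
vector `(R_1,…,R_{m+1})` is uniformly distributed on the set of nondecreasing tuples with
values in `{1,…,N+1}`. -/
theorem rank_vector_uniform
    {Ω : Type*} [MeasurableSpace Ω] (Pr : MeasureTheory.Measure Ω) [IsProbabilityMeasure Pr]
    (m N : ℕ) (hm : 0 < m) (hN : 0 < N)
    (μ : MeasureTheory.Measure ℝ) [IsProbabilityMeasure μ] (hcont : ∀ x : ℝ, μ {x} = 0)
    (S : Fin (m + 1) → Ω → ℝ) (G : Fin N → Ω → ℝ)
    (hSmeas : ∀ i, Measurable (S i)) (hGmeas : ∀ j, Measurable (G j))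
    (hSindep : iIndepFun S Pr)
    (hGindep : iIndepFun G Pr)
    (hSG : IndepFun (fun ω i => S i ω) (fun ω j => G j ω) Pr)
    (hSlaw : ∀ i, Pr.map (S i) = μ) (hGlaw : ∀ j, Pr.map (G j) = μ) :
    ∀ ζ : Fin (m + 1) → ℕ, ζ ∈ monoTuples m N →
      Pr {ω | (fun r : Fin (m + 1) =>
            synthRank N (fun j => G j ω) (orderStat (fun i => S i ω) r)) = ζ}
        = 1 / ((monoTuples m N).card : ENNReal) := by
  classical
  intro ζ hζ
  set X : Ω → (Fin (m + 1) ⊕ Fin N) → ℝ :=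
    fun ω => Sum.elim (fun i => S i ω) (fun j => G j ω) with hXdef
  have hXmeas : Measurable X := by
    apply measurable_pi_lambda
    intro i
    cases i with
    | inl a => exact hSmeas a
    | inr b => exact hGmeas b
  -- law of X
  have hS' : Pr.map (fun ω (i : Fin (m + 1)) => S i ω) = Measure.pi (fun _ => μ) :=
    RankAux.map_pi_of_iIndep Pr μ S hSmeas hSindep hSlaw
  have hG' : Pr.map (fun ω (j : Fin N) => G j ω) = Measure.pi (fun _ => μ) :=
    RankAux.map_pi_of_iIndep Pr μ G hGmeas hGindep hGlaw
  have hSGm : Measurable (fun ω (i : Fin (m + 1)) => S i ω) := measurable_pi_lambda _ hSmeas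
  have hGGm : Measurable (fun ω (j : Fin N) => G j ω) := measurable_pi_lambda _ hGmeas
  have hpair : Pr.map (fun ω => ((fun i => S i ω), (fun j => G j ω)))
      = (Measure.pi (fun _ : Fin (m + 1) => μ)).prod (Measure.pi (fun _ : Fin N => μ)) := by
    rw [← hS', ← hG']
    exact (indepFun_iff_map_prod_eq_prod_map_map hSGm.aemeasurable hGGm.aemeasurable).mp hSG
  have hXeq : X = ⇑(MeasurableEquiv.sumPiEquivProdPi (fun _ : Fin (m + 1) ⊕ Fin N => ℝ)).symm
      ∘ (fun ω => ((fun i => S i ω), (fun j => G j ω))) := by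
    funext ω
    funext i
    cases i <;> rfl
  have hlawX : Pr.map X = Measure.pi (fun _ : Fin (m + 1) ⊕ Fin N => μ) := by
    rw [hXeq, ← Measure.map_map (MeasurableEquiv.measurable _) (hSGm.prodMk hGGm), hpair]
    exact (measurePreserving_sumPiEquivProdPi_symm
      (fun _ : Fin (m + 1) ⊕ Fin N => μ)).map_eq
  -- pairwise coincidence events are null
  have hpairnull : ∀ i j : (Fin (m + 1) ⊕ Fin N), i ≠ j → Pr {ω | X ω i = X ω j} = 0 := by
    intro i j hij
    have key : ∀ (U V : Ω → ℝ), Measurable U → Measurable V → IndepFun U V Pr →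
        Pr.map U = μ → Pr.map V = μ → Pr {ω | U ω = V ω} = 0 :=
      fun U V hU hV h hlU hlV => RankAux.indepFun_null Pr μ hcont hU hV h hlU hlV
    cases i with
    | inl a =>
      cases j with
      | inl b =>
        have hab : a ≠ b := fun h => hij (by rw [h])
        exact key _ _ (hSmeas a) (hSmeas b) (hSindep.indepFun hab) (hSlaw a) (hSlaw b)
      | inr b =>
        have hind : IndepFun (S a) (G b) Pr :=
          hSG.comp (φ := fun v : Fin (m + 1) → ℝ => v a) (ψ := fun v : Fin N → ℝ => v b)
            (measurable_pi_apply a) (measurable_pi_apply b)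
        exact key _ _ (hSmeas a) (hGmeas b) hind (hSlaw a) (hGlaw b)
    | inr a =>
      cases j with
      | inl b =>
        have hind : IndepFun (G a) (S b) Pr :=
          (hSG.comp (φ := fun v : Fin (m + 1) → ℝ => v b) (ψ := fun v : Fin N → ℝ => v a)
            (measurable_pi_apply b) (measurable_pi_apply a)).symm
        exact key _ _ (hGmeas a) (hSmeas b) hind (hGlaw a) (hSlaw b)
      | inr b =>
        have hab : a ≠ b := fun h => hij (by rw [h])
        exact key _ _ (hGmeas a) (hGmeas b) (hGindep.indepFun hab) (hGlaw a) (hGlaw b)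
  have hXinj_null : Pr {ω | ¬ Function.Injective (X ω)} = 0 := by
    have hsub : {ω | ¬ Function.Injective (X ω)} ⊆
        ⋃ (i : Fin (m + 1) ⊕ Fin N) (j : Fin (m + 1) ⊕ Fin N) (_ : i ≠ j),
          {ω | X ω i = X ω j} := by
      intro ω hω
      simp only [Set.mem_setOf_eq, Function.Injective] at hω
      push_neg at hω
      obtain ⟨a, b, hab, hne⟩ := hω
      exact Set.mem_iUnion.mpr ⟨a, Set.mem_iUnion.mpr ⟨b, Set.mem_iUnion.mpr ⟨hne, hab⟩⟩⟩
    exact measure_mono_null hsub (measure_iUnion_null fun i => measure_iUnion_null fun j =>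
      measure_iUnion_null fun hij => hpairnull i j hij)
  have hInjMeas : MeasurableSet {x : (Fin (m + 1) ⊕ Fin N) → ℝ | Function.Injective x} := by
    have hrw : {x : (Fin (m + 1) ⊕ Fin N) → ℝ | Function.Injective x}
        = ⋂ (i) (j) (_ : i ≠ j), {x : (Fin (m + 1) ⊕ Fin N) → ℝ | x i = x j}ᶜ := by
      ext x
      simp only [Set.mem_setOf_eq, Set.mem_iInter, Set.mem_compl_iff]
      constructor
      · intro h i j hij hx
        exact hij (h hx)
      · intro h a b hab
        by_contra hne
        exact h a b hne hab
    rw [hrw]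
    exact MeasurableSet.iInter fun i => MeasurableSet.iInter fun j => MeasurableSet.iInter
      fun _ => (measurableSet_eq_fun (measurable_pi_apply i) (measurable_pi_apply j)).compl
  -- the event as a union of sorting cells
  set Tz : Finset (Fin (m + 1 + N) ≃ (Fin (m + 1) ⊕ Fin N)) :=
    Finset.univ.filter (fun e => RankAux.zeta e = ζ) with hTz
  set U : Set ((Fin (m + 1) ⊕ Fin N) → ℝ) := ⋃ e ∈ Tz, RankAux.Msets e with hU
  have hUmeas : MeasurableSet U :=
    Set.Finite.measurableSet_biUnion (Tz.finite_toSet) (fun e _ => RankAux.measurableSet_Msets e)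
  have hae : {ω | (fun r : Fin (m + 1) =>
        synthRank N (fun j => G j ω) (orderStat (fun i => S i ω) r)) = ζ} =ᵐ[Pr] X ⁻¹' U := by
    rw [Filter.eventuallyEq_set]
    have hinj_ae : ∀ᵐ ω ∂Pr, Function.Injective (X ω) := by
      rw [ae_iff]
      exact hXinj_null
    filter_upwards [hinj_ae] with ω hω
    constructor
    · intro hmem
      obtain ⟨e, he⟩ := RankAux.exists_mem_Msets hω
      have hz : ∀ r, synthRank N (fun j => G j ω) (orderStat (fun i => S i ω) r)
          = RankAux.zeta e r := fun r => RankAux.rank_eq_zeta e he r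
      have heT : e ∈ Tz := by
        rw [hTz, Finset.mem_filter]
        refine ⟨Finset.mem_univ _, ?_⟩
        funext r
        exact (hz r).symm.trans (congrFun hmem r)
      exact Set.mem_preimage.mpr (Set.mem_biUnion heT he)
    · intro hmem
      obtain ⟨e, heT, he⟩ := Set.mem_iUnion₂.mp (Set.mem_preimage.mp hmem)
      have hzeq : RankAux.zeta e = ζ := (Finset.mem_filter.mp heT).2
      show (fun r : Fin (m + 1) =>
        synthRank N (fun j => G j ω) (orderStat (fun i => S i ω) r)) = ζ
      funext r
      exact (RankAux.rank_eq_zeta e he r).trans (congrFun hzeq r)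
  rw [measure_congr hae]
  have hmap : Pr (X ⁻¹' U) = Measure.pi (fun _ : Fin (m + 1) ⊕ Fin N => μ) U := by
    rw [← hlawX, Measure.map_apply hXmeas hUmeas]
  rw [hmap]
  -- decompose
  obtain ⟨e₀, he₀⟩ := RankAux.exists_zeta_eq hζ
  set π : Measure ((Fin (m + 1) ⊕ Fin N) → ℝ) := Measure.pi (fun _ => μ) with hπ
  set w : ENNReal := π (RankAux.Msets e₀) with hwdef
  have hw : ∀ e, π (RankAux.Msets e) = w := fun e => RankAux.measure_Msets_eq μ e e₀
  have hdisj : ∀ (s : Finset (Fin (m + 1 + N) ≃ (Fin (m + 1) ⊕ Fin N))),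
      (↑s : Set (Fin (m + 1 + N) ≃ (Fin (m + 1) ⊕ Fin N))).PairwiseDisjoint RankAux.Msets := by
    intro s e _ e' _ hne
    exact Set.disjoint_iff_inter_eq_empty.mpr (RankAux.Msets_disjoint hne)
  have hsplit : π U = (Tz.card : ENNReal) * w := by
    rw [hU, measure_biUnion_finset (hdisj Tz) (fun e _ => RankAux.measurableSet_Msets e)]
    rw [Finset.sum_congr rfl (fun e _ => hw e), Finset.sum_const, nsmul_eq_mul]
  -- total mass
  have hInjc : π {x : (Fin (m + 1) ⊕ Fin N) → ℝ | Function.Injective x}ᶜ = 0 := by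
    rw [← hlawX, Measure.map_apply hXmeas hInjMeas.compl]
    exact hXinj_null
  have hInj1 : π {x : (Fin (m + 1) ⊕ Fin N) → ℝ | Function.Injective x} = 1 := by
    have := measure_compl hInjMeas (measure_ne_top π _)
    rw [hInjc] at this
    have hu : π Set.univ = 1 := measure_univ
    rw [hu] at this
    -- this : 0 = 1 - π Inj
    have hle : π {x : (Fin (m + 1) ⊕ Fin N) → ℝ | Function.Injective x} ≤ 1 := prob_le_one
    rw [eq_comm, tsub_eq_zero_iff_le] at this
    exact le_antisymm hle this
  have htotal : ((Finset.univ : Finset (Fin (m + 1 + N) ≃ (Fin (m + 1) ⊕ Fin N))).card : ENNReal)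
      * w = 1 := by
    have hsub : {x : (Fin (m + 1) ⊕ Fin N) → ℝ | Function.Injective x}
        ⊆ ⋃ e ∈ (Finset.univ : Finset (Fin (m + 1 + N) ≃ (Fin (m + 1) ⊕ Fin N))),
          RankAux.Msets e := by
      intro x hx
      obtain ⟨e, he⟩ := RankAux.exists_mem_Msets hx
      exact Set.mem_biUnion (Finset.mem_univ e) he
    have h1 : (1 : ENNReal) ≤ π (⋃ e ∈ (Finset.univ : Finset (Fin (m + 1 + N) ≃ (Fin (m + 1) ⊕ Fin N))), RankAux.Msets e) :=
      hInj1 ▸ measure_mono hsub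
    have h2 : π (⋃ e ∈ (Finset.univ : Finset (Fin (m + 1 + N) ≃ (Fin (m + 1) ⊕ Fin N))), RankAux.Msets e) ≤ 1 := prob_le_one
    have heq : π (⋃ e ∈ (Finset.univ : Finset (Fin (m + 1 + N) ≃ (Fin (m + 1) ⊕ Fin N))), RankAux.Msets e) = 1 := le_antisymm h2 h1
    rw [measure_biUnion_finset (hdisj _) (fun e _ => RankAux.measurableSet_Msets e)] at heq
    rw [Finset.sum_congr rfl (fun e _ => hw e), Finset.sum_const, nsmul_eq_mul] at heq
    exact heq
  -- fiber count
  have hfib : (Finset.univ : Finset (Fin (m + 1 + N) ≃ (Fin (m + 1) ⊕ Fin N))).card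
      = (monoTuples m N).card * Tz.card := by
    rw [Finset.card_eq_sum_card_fiberwise (fun e _ => RankAux.zeta_mem e)]
    rw [Finset.sum_congr rfl (fun ζ' hζ' => RankAux.card_fiber_eq hζ' hζ)]
    rw [Finset.sum_const, smul_eq_mul]
  have hK0 : ((monoTuples m N).card : ENNReal) ≠ 0 := by
    have : (fun _ : Fin (m + 1) => 1) ∈ monoTuples m N := by
      rw [RankAux.mem_monoTuples]
      exact ⟨fun r => ⟨le_refl 1, by omega⟩, monotone_const⟩
    have hpos : 0 < (monoTuples m N).card := Finset.card_pos.mpr ⟨_, this⟩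
    exact_mod_cast hpos.ne'
  have hKtop : ((monoTuples m N).card : ENNReal) ≠ ⊤ := ENNReal.natCast_ne_top _
  rw [hsplit]
  rw [ENNReal.eq_div_iff hK0 hKtop]
  rw [← mul_assoc]
  have hcast : ((monoTuples m N).card : ENNReal) * (Tz.card : ENNReal)
      = ((Finset.univ : Finset (Fin (m + 1 + N) ≃ (Fin (m + 1) ⊕ Fin N))).card : ENNReal) := by
    rw [hfib]
    push_cast
    ring
  rw [hcast, htotal]
end

section
/- Let m, N be positive integers and α, β ∈ (0,1). Suppose the synthetic scores S̃_1,…,S̃_N have a continuous joint marginal distribution (so they are almost surely pairwise distinct and almost surely distinct from any fixed candidate score value). Let Ĉ(x) = { y : T(s(x,y)) ≤ Q̃_{1−α} } be the SPI prediction set, and let Ĉ^fast(x) = { y : s(x,y) ≤ max{ min{ Q̃′_{1−α}, S_{(R̃^−)} }, S_{(R̃^+)} } }, where R̃^± = max{ r ∈ {1,…,m+1} : R_r^± ≤ ⌈(1−α)(N+1)⌉ }, S_{(m+1)} = +∞, and S_{(r)} denotes the r-th smallest real calibration score. Then for a test point (X_{m+1}, Y_{m+1}), P( {Y_{m+1}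 ∈ Ĉ(X_{m+1})} Δ {Y_{m+1} ∈ Ĉ^fast(X_{m+1})} ) = 0, where Δ denotes the symmetric difference of events. -/
open MeasureTheory ProbabilityTheory Finset

/-- `R̃^- = max{r ∈ {1,…,m+1} : R_r^- ≤ ⌈(1−α)(N+1)⌉}` (`0` if no such `r`). -/
noncomputable def RtilMinus (m N : ℕ) (β α : ℝ) : ℕ :=
  sSup {r | r ∈ Finset.Icc 1 (m + 1) ∧ Rminus m N β r ≤ qIdx N α}

/-- `R̃^+ = max{r ∈ {1,…,m+1} : R_r^+ ≤ ⌈(1−α)(N+1)⌉}` (`0` if no such `r`). -/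
noncomputable def RtilPlus (m N : ℕ) (β α : ℝ) : ℕ :=
  sSup {r | r ∈ Finset.Icc 1 (m + 1) ∧ Rplus m N β r ≤ qIdx N α}

/-- The threshold `max{min{Q̃′_{1−α}, S_{(R̃^−)}}, S_{(R̃^+)}}` of the fast prediction set,
where `Q̃′_{1−α}` is the `(⌈(1−α)(N+1)⌉+1)`-th smallest synthetic score, `S_{(m+1)} = +∞`,
and `S_{(R̃^±)} = -∞` if the corresponding maximum is over an empty set. -/
noncomputable def fastThreshold (m N : ℕ) (β α : ℝ) (S : Fin m → ℝ) (g : Fin N → ℝ) : EReal :=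
  max (min (synthSorted N g (qIdx N α + 1)) (realSorted m S (RtilMinus m N β α)))
    (realSorted m S (RtilPlus m N β α))

/-! The synthetic scores are almost surely pairwise distinct and, by independence, almost surely
different from the test score `η`. For such scores, with `k` the number of synthetic scores `≤ η`
and `r = r_η`, the transporter is `T(η) = S̃_{(max(R⁻_r, min(k, R⁺_r)))}`, so with
`q = ⌈(1-α)(N+1)⌉` the event `T(η) ≤ Q̃_{1-α} = S̃_{(q)}` reads `max(R⁻_r, min(k, R⁺_r)) ≤ q`.
As `R⁻_r ≤ R⁺_r`, this is `(k ≤ q ∧ R⁻_r ≤ q) ∨ R⁺_r ≤ q`, and these three conditions are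
`η ≤ Q̃′_{1-α}`, `η ≤ S_{(R̃⁻)}` and `η ≤ S_{(R̃⁺)}`; the last two because `r ↦ R^±_r` is
monotone, the laws `p_{m,N,r}` being stochastically increasing in `r`. -/

/-- The partial sums of the upper Chu–Vandermonde convolution
`∑_{i} C(i+a, a) C(N-i+b, b) = C(N+a+b+1, a+b+1)`. -/
def upperVandermondeSum (N a b t : ℕ) : ℕ :=
  ∑ i ∈ range t, (i + a).choose a * (N + b - i).choose b

theorem upperVandermondeSum_succ_left (N a b : ℕ) {t : ℕ} (ht : t ≤ N + 1) :
    upperVandermondeSum N (a + 1) b t + (t + a).choose (a + 1) * (N + b + 1 - t).choose (b + 1)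
      = upperVandermondeSum N a (b + 1) t := by
  induction t with
  | zero => simp [upperVandermondeSum]
  | succ t ih =>
    have pascal : (t + a + 1).choose (a + 1) * (N + b - t).choose b
        + (t + a + 1).choose (a + 1) * (N + b - t).choose (b + 1)
        = (t + a).choose (a + 1) * (N + b + 1 - t).choose (b + 1)
          + (t + a).choose a * (N + b + 1 - t).choose (b + 1) := by
      rw [show N + b + 1 - t = N + b - t + 1 by omega, Nat.choose_succ_succ (N + b - t) b,
        Nat.choose_succ_succ (t + a) a]
      ring
    simp only [upperVandermondeSum, sum_range_succ, ← add_assoc] at ih ⊢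
    rw [show t + 1 + a = t + a + 1 by omega, show N + b + 1 - (t + 1) = N + b - t by omega,
      ← ih (by omega)]
    linarith

theorem upperVandermondeSum_total (N a b : ℕ) :
    upperVandermondeSum N a b (N + 1) = (N + a + b + 1).choose (a + b + 1) := by
  induction a generalizing b with
  | zero =>
    rw [Nat.add_zero, Nat.zero_add, ← Nat.sum_range_add_choose, ← sum_range_reflect,
      upperVandermondeSum]
    refine sum_congr rfl fun i hi => ?_
    rw [mem_range] at hi
    rw [Nat.choose_zero_right, one_mul]
    congr 1
    omega
  | succ a ih =>
    have h := upperVandermondeSum_succ_left N a b (le_refl (N + 1))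
    rw [show N + b + 1 - (N + 1) = b by omega, Nat.choose_succ_self, mul_zero, add_zero,
      ih (b + 1)] at h
    rw [h]
    congr 1 <;> omega

theorem Fwindow_eq {m N r : ℕ} (hr1 : 1 ≤ r) (hrm : r ≤ m + 1) (t : ℕ) :
    Fwindow m N r t = upperVandermondeSum N (r - 1) (m + 1 - r) t / (N + m + 1).choose (m + 1) := by
  rw [Fwindow, upperVandermondeSum, ← Ico_add_one_right_eq_Icc, sum_Ico_eq_sum_range,
    Nat.add_sub_cancel, Nat.cast_sum, sum_div]
  refine sum_congr rfl fun i _ => ?_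
  rw [pWindow, show 1 + i + r - 2 = i + (r - 1) by omega,
    show N + m + 2 - (1 + i) - r = N + (m + 1 - r) - i by omega]

theorem Fwindow_mono (m N r : ℕ) : Monotone (Fwindow m N r) := fun _ _ h =>
  sum_le_sum_of_subset_of_nonneg (Icc_subset_Icc_right h) fun _ _ _ => by
    unfold pWindow; positivity

theorem Fwindow_zero (m N r : ℕ) : Fwindow m N r 0 = 0 := by
  simp [Fwindow]

theorem Fwindow_total {m N r : ℕ} (hr1 : 1 ≤ r) (hrm : r ≤ m + 1) :
    Fwindow m N r (N + 1) = 1 := by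
  rw [Fwindow_eq hr1 hrm, upperVandermondeSum_total,
    show N + (r - 1) + (m + 1 - r) + 1 = N + m + 1 by omega,
    show r - 1 + (m + 1 - r) + 1 = m + 1 by omega]
  exact div_self (Nat.cast_ne_zero.2 (Nat.choose_pos (by omega)).ne')

theorem Fwindow_succ_rank_le {m N r t : ℕ} (hr1 : 1 ≤ r) (hrm : r ≤ m) (ht : t ≤ N + 1) :
    Fwindow m N (r + 1) t ≤ Fwindow m N r t := by
  obtain ⟨a, rfl⟩ : ∃ a, r = a + 1 := ⟨r - 1, by omega⟩
  obtain ⟨b, rfl⟩ : ∃ b, m = a + 1 + b := ⟨m - (a + 1), by omega⟩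
  rw [Fwindow_eq (by omega) (by omega), Fwindow_eq (by omega) (by omega),
    show a + 1 + 1 - 1 = a + 1 by omega, show a + 1 + b + 1 - (a + 1 + 1) = b by omega,
    show a + 1 - 1 = a by omega, show a + 1 + b + 1 - (a + 1) = b + 1 by omega]
  gcongr
  exact Nat.le.intro (upperVandermondeSum_succ_left N a b ht)

theorem Fwindow_antitone_rank {m N r r' t : ℕ} (hr1 : 1 ≤ r) (hrr' : r ≤ r') (hr'm : r' ≤ m + 1)
    (ht : t ≤ N + 1) : Fwindow m N r' t ≤ Fwindow m N r t := by
  induction r', hrr' using Nat.le_induction with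
  | base => rfl
  | succ r' hrr' ih => exact (Fwindow_succ_rank_le (by omega) (by omega) ht).trans (ih (by omega))

section WindowEndpoints

variable {m N : ℕ} {β : ℝ}

theorem Rminus_spec (hβ : 0 ≤ β) (r : ℕ) :
    Rminus m N β r ∈ Icc 1 (N + 1) ∧ Fwindow m N r (Rminus m N β r - 1) ≤ β / 2 :=
  Nat.sSup_mem (s := {t | t ∈ Icc 1 (N + 1) ∧ Fwindow m N r (t - 1) ≤ β / 2})
    ⟨1, by simp, by norm_num [Fwindow_zero]; linarith⟩ ⟨N + 1, fun _ ht => (mem_Icc.1 ht.1).2⟩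

theorem Rplus_spec (hβ : 0 ≤ β) {r : ℕ} (hr1 : 1 ≤ r) (hrm : r ≤ m + 1) :
    Rplus m N β r ∈ Icc 1 (N + 1) ∧ 1 - β / 2 ≤ Fwindow m N r (Rplus m N β r) :=
  Nat.sInf_mem (s := {t | t ∈ Icc 1 (N + 1) ∧ 1 - β / 2 ≤ Fwindow m N r t})
    ⟨N + 1, by simp, by rw [Fwindow_total hr1 hrm]; linarith⟩

theorem Rminus_le_Rplus (hβ : 0 ≤ β) (hβ' : β < 1) {r : ℕ} (hr1 : 1 ≤ r) (hrm : r ≤ m + 1) :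
    Rminus m N β r ≤ Rplus m N β r := by
  by_contra! h
  have := Fwindow_mono m N r (show Rplus m N β r ≤ Rminus m N β r - 1 by omega)
  linarith [(Rminus_spec (m := m) (N := N) hβ r).2, (Rplus_spec (N := N) hβ hr1 hrm).2]

theorem Rminus_mono (hβ : 0 ≤ β) {r r' : ℕ} (hr1 : 1 ≤ r) (hrr' : r ≤ r') (hr'm : r' ≤ m + 1) :
    Rminus m N β r ≤ Rminus m N β r' := by
  obtain ⟨hmem, hF⟩ := Rminus_spec (m := m) (N := N) hβ r
  refine le_csSup ⟨N + 1, fun _ ht => (mem_Icc.1 ht.1).2⟩ ⟨hmem, ?_⟩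
  exact (Fwindow_antitone_rank hr1 hrr' hr'm (by have := (mem_Icc.1 hmem).2; omega)).trans hF

theorem Rplus_mono (hβ : 0 ≤ β) {r r' : ℕ} (hr1 : 1 ≤ r) (hrr' : r ≤ r') (hr'm : r' ≤ m + 1) :
    Rplus m N β r ≤ Rplus m N β r' := by
  obtain ⟨hmem, hF⟩ := Rplus_spec (N := N) hβ (hr1.trans hrr') hr'm
  exact Nat.sInf_le ⟨hmem, hF.trans (Fwindow_antitone_rank hr1 hrr' hr'm (mem_Icc.1 hmem).2)⟩

end WindowEndpoints

theorem card_filter_orderStat {n : ℕ} (f : Fin n → ℝ) (p : ℝ → Prop) [DecidablePred p] :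
    #{i | p (orderStat f i)} = #{i | p (f i)} := by
  simp only [card_filter]
  exact Equiv.sum_comp (Tuple.sort f) fun i => if p (f i) then 1 else 0

theorem orderStat_mem_iff {n : ℕ} {s : Set ℝ} [DecidablePred (· ∈ s)] (hs : IsLowerSet s)
    (f : Fin n → ℝ) (j : Fin n) : orderStat f j ∈ s ↔ (j : ℕ) < #{i | f i ∈ s} := by
  have hmono : Monotone (orderStat f) := Tuple.monotone_sort f
  rw [← card_filter_orderStat f (· ∈ s)]
  constructor
  · intro hj
    have : Iic j ⊆ ({i | orderStat f i ∈ s} : Finset (Fin n)) := fun i hi => by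
      simpa using hs (hmono (mem_Iic.1 hi)) hj
    simpa using card_le_card this
  · intro hj
    by_contra hj'
    have : ({i | orderStat f i ∈ s} : Finset (Fin n)) ⊆ Iio j := fun i hi => by
      simp only [mem_filter, mem_univ, true_and] at hi
      exact mem_Iio.2 (lt_of_not_ge fun hji => hj' (hs (hmono hji) hi))
    have := card_le_card this
    rw [Fin.card_Iio] at this
    omega

section SortedScores

variable {N : ℕ} (g : Fin N → ℝ)

theorem synthSorted_le_coe_iff (η : ℝ) {t : ℕ} (ht : 1 ≤ t) :
    synthSorted N g t ≤ η ↔ t ≤ #{j | g j ≤ η} := by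
  unfold synthSorted
  split_ifs with h
  · rw [EReal.coe_le_coe_iff, ← Set.mem_Iic, orderStat_mem_iff (isLowerSet_Iic η)]
    simp only [Set.mem_Iic]
    omega
  · have := card_le_univ (filter (fun j => g j ≤ η) univ)
    simp only [Fintype.card_fin] at this
    simp only [top_le_iff, EReal.coe_ne_top, false_iff]
    omega

theorem synthSorted_monotoneOn : MonotoneOn (synthSorted N g) (Set.Ici 1) := by
  intro t ht u hu htu
  by_cases huN : u ≤ N
  · rw [synthSorted, synthSorted, dif_pos ⟨ht, htu.trans huN⟩, dif_pos ⟨hu, huN⟩,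
      EReal.coe_le_coe_iff]
    exact Tuple.monotone_sort g (Fin.mk_le_mk.2 (by omega))
  · rw [show synthSorted N g u = ⊤ from dif_neg (by omega)]
    exact le_top

theorem synthSorted_strictMonoOn (hg : Function.Injective g) :
    StrictMonoOn (synthSorted N g) (Set.Icc 1 (N + 1)) := by
  intro t ⟨ht, _⟩ u ⟨_, huN⟩ htu
  have hsort : StrictMono (orderStat g) :=
    (Tuple.monotone_sort g).strictMono_of_injective (hg.comp (Tuple.sort g).injective)
  rw [synthSorted, dif_pos ⟨ht, by omega⟩]
  by_cases hu : u ≤ N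
  · rw [synthSorted, dif_pos ⟨by omega, hu⟩, EReal.coe_lt_coe_iff]
    exact hsort (Fin.mk_lt_mk.2 (by omega))
  · rw [show synthSorted N g u = ⊤ from dif_neg (by omega)]
    exact EReal.coe_lt_top _

theorem synthSorted_ne_coe {η : ℝ} (hη : ∀ j, g j ≠ η) (t : ℕ) : synthSorted N g t ≠ η := by
  unfold synthSorted
  split_ifs
  · exact fun h => hη _ (EReal.coe_eq_coe_iff.1 h)
  · exact EReal.top_ne_coe η

end SortedScores

theorem rankOf_mem_Icc (m : ℕ) (S : Fin m → ℝ) (η : ℝ) : rankOf m S η ∈ Icc 1 (m + 1) := by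
  have := card_le_univ (filter (fun i => S i < η) univ)
  simp only [Fintype.card_fin] at this
  simp only [rankOf, mem_Icc]
  omega

theorem coe_le_realSorted_iff {m : ℕ} (S : Fin m → ℝ) (η : ℝ) {t : ℕ} (ht : t ≤ m + 1) :
    (η : EReal) ≤ realSorted m S t ↔ rankOf m S η ≤ t := by
  have hrank := mem_Icc.1 (rankOf_mem_Icc m S η)
  unfold realSorted
  split_ifs with h h'
  · rw [EReal.coe_le_coe_iff, ← not_lt, ← Set.mem_Iio, orderStat_mem_iff (isLowerSet_Iio η)]
    simp only [Set.mem_Iio, rankOf]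
    omega
  · simp only [le_top, true_iff]
    omega
  · simp only [le_bot_iff, EReal.coe_ne_bot, false_iff]
    omega

theorem le_sSup_Icc_iff {n r : ℕ} {P : ℕ → Prop}
    (hP : ∀ r r', 1 ≤ r → r ≤ r' → r' ≤ n → P r' → P r) (hr : r ∈ Icc 1 n) :
    r ≤ sSup {r | r ∈ Icc 1 n ∧ P r} ↔ P r := by
  have hbdd : BddAbove {r | r ∈ Icc 1 n ∧ P r} := ⟨n, fun _ h => (mem_Icc.1 h.1).2⟩
  refine ⟨fun hle => ?_, fun h => le_csSup hbdd ⟨hr, h⟩⟩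
  obtain ⟨hmem, hPmax⟩ := Nat.sSup_mem (Set.nonempty_iff_ne_empty.2 fun hempty => by
    rw [hempty, csSup_empty] at hle; exact absurd (mem_Icc.1 hr).1 (by simp_all)) hbdd
  exact hP r _ (mem_Icc.1 hr).1 hle (mem_Icc.1 hmem).2 hPmax

theorem coe_le_realSorted_sSup_iff {m : ℕ} (S : Fin m → ℝ) (η : ℝ) {P : ℕ → Prop}
    (hP : ∀ r r', 1 ≤ r → r ≤ r' → r' ≤ m + 1 → P r' → P r) :
    (η : EReal) ≤ realSorted m S (sSup {r | r ∈ Icc 1 (m + 1) ∧ P r}) ↔ P (rankOf m S η) := by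
  rw [coe_le_realSorted_iff S η (csSup_le' fun _ h => (mem_Icc.1 h.1).2)]
  exact le_sSup_Icc_iff hP (rankOf_mem_Icc m S η)

section Transport

variable {m N : ℕ} {β : ℝ} (S : Fin m → ℝ) (g : Fin N → ℝ) (η : ℝ)

theorem NNminus_eq {r : ℕ} (h1 : 1 ≤ Rminus m N β r) (hlo : Rminus m N β r ≤ #{j | g j ≤ η})
    (hhi : #{j | g j ≤ η} ≤ Rplus m N β r) :
    NNminus m N β g r η = synthSorted N g #{j | g j ≤ η} := by
  refine IsGreatest.csSup_eq ⟨⟨_, hlo, hhi, rfl, ?_⟩, ?_⟩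
  · exact (synthSorted_le_coe_iff g η (h1.trans hlo)).2 le_rfl
  · rintro _ ⟨j, hj1, -, rfl, hj⟩
    exact synthSorted_monotoneOn g (h1.trans hj1) (h1.trans hlo)
      ((synthSorted_le_coe_iff g η (h1.trans hj1)).1 hj)

theorem transport_eq_synthSorted (hβ : 0 ≤ β) (hβ' : β < 1) :
    transport m N β S g η = synthSorted N g
      (max (Rminus m N β (rankOf m S η)) (min #{j | g j ≤ η} (Rplus m N β (rankOf m S η)))) := by
  obtain ⟨hr1, hrm⟩ := mem_Icc.1 (rankOf_mem_Icc m S η)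
  have hlo := (mem_Icc.1 (Rminus_spec (m := m) (N := N) hβ (rankOf m S η)).1).1
  have hhi := (mem_Icc.1 (Rplus_spec (N := N) hβ hr1 hrm).1).1
  have hlohi := Rminus_le_Rplus (N := N) hβ hβ' hr1 hrm
  unfold transport windowHi windowLo
  simp only [synthSorted_le_coe_iff g η hhi, synthSorted_le_coe_iff g η hlo]
  split_ifs with hU hL
  · congr 1; omega
  · rw [NNminus_eq g η hlo hL (by omega)]
    congr 1; omega
  · congr 1; omega

theorem qIdx_mem_Icc (N : ℕ) {α : ℝ} (hα : 0 ≤ α) (hα' : α < 1) : qIdx N α ∈ Icc 1 (N + 1) := by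
  have hpos : 0 < (1 - α) * ((N : ℝ) + 1) := by nlinarith
  refine mem_Icc.2 ⟨Nat.one_le_iff_ne_zero.2 (Nat.ceil_pos.2 hpos).ne', Nat.ceil_le.2 ?_⟩
  push_cast
  nlinarith

theorem transport_le_synthQuantile_iff {α : ℝ} (hα : 0 ≤ α) (hα' : α < 1) (hβ : 0 ≤ β)
    (hβ' : β < 1) (hg : Function.Injective g) (hη : ∀ j, g j ≠ η) :
    transport m N β S g η ≤ synthQuantile N g α ↔ (η : EReal) ≤ fastThreshold m N β α S g := by
  obtain ⟨hr1, hrm⟩ := mem_Icc.1 (rankOf_mem_Icc m S η)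
  obtain ⟨hloN1, hloN⟩ := mem_Icc.1 (Rminus_spec (m := m) (N := N) hβ (rankOf m S η)).1
  obtain ⟨hhi1, hhiN⟩ := mem_Icc.1 (Rplus_spec (N := N) hβ hr1 hrm).1
  have hlohi := Rminus_le_Rplus (N := N) hβ hβ' hr1 hrm
  obtain ⟨hq1, hqN⟩ := mem_Icc.1 (qIdx_mem_Icc N hα hα')
  have hnext : (η : EReal) ≤ synthSorted N g (qIdx N α + 1) ↔ #{j | g j ≤ η} ≤ qIdx N α := by
    rw [le_iff_lt_or_eq, or_iff_left (synthSorted_ne_coe g hη _).symm, ← not_le,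
      synthSorted_le_coe_iff g η (by omega)]
    omega
  rw [transport_eq_synthSorted S g η hβ hβ', synthQuantile,
    (synthSorted_strictMonoOn g hg).le_iff_le ⟨by omega, by omega⟩ ⟨by omega, by omega⟩,
    fastThreshold, le_max_iff, le_min_iff, hnext, RtilMinus, RtilPlus,
    coe_le_realSorted_sSup_iff S η fun _ _ hr1 hrr' hr'm h =>
      (Rminus_mono hβ hr1 hrr' hr'm).trans h,
    coe_le_realSorted_sSup_iff S η fun _ _ hr1 hrr' hr'm h =>
      (Rplus_mono hβ hr1 hrr' hr'm).trans h]
  omega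

end Transport

theorem ProbabilityTheory.IndepFun.measure_preimage_eq_zero {Ω α β : Type*} [MeasurableSpace Ω]
    [MeasurableSpace α] [MeasurableSpace β] {μ : Measure Ω} [IsFiniteMeasure μ] {Z : Ω → α}
    {W : Ω → β} (hZW : IndepFun Z W μ) (hZ : Measurable Z) (hW : Measurable W)
    {D : Set (α × β)} (hD : MeasurableSet D) (hsec : ∀ z, μ (W ⁻¹' (Prod.mk z ⁻¹' D)) = 0) :
    μ ((fun ω => (Z ω, W ω)) ⁻¹' D) = 0 := by
  rw [← Measure.map_apply (hZ.prodMk hW) hD,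
    hZW.map_prod_eq_prod_map_map hZ.aemeasurable hW.aemeasurable]
  refine Measure.measure_prod_null_of_ae_null hD (Filter.Eventually.of_forall fun z => ?_)
  change (μ.map W) (Prod.mk z ⁻¹' D) = 0
  rw [Measure.map_apply hW (measurable_prodMk_left hD)]
  exact hsec z

theorem spi_fast_prediction_set_equivalence_general
    {Ω 𝒳 𝒴 : Type*} [MeasurableSpace Ω] [MeasurableSpace 𝒳] [MeasurableSpace 𝒴]
    (Pr : MeasureTheory.Measure Ω) [IsProbabilityMeasure Pr]
    (m N : ℕ)
    (α β : ℝ) (hα : α ∈ Set.Ioo (0 : ℝ) 1) (hβ : β ∈ Set.Ioo (0 : ℝ) 1)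
    (s : 𝒳 → 𝒴 → ℝ) (hs : Measurable fun p : 𝒳 × 𝒴 => s p.1 p.2)
    (S : Fin m → Ω → ℝ) (G : Fin N → Ω → ℝ) (hGmeas : ∀ j, Measurable (G j))
    (X : Ω → 𝒳) (Y : Ω → 𝒴) (hX : Measurable X) (hY : Measurable Y)
    (hGdistinct : ∀ᵐ ω ∂Pr, Function.Injective fun j => G j ω)
    (hGnoatom : ∀ c : ℝ, Pr {ω | ∃ j, G j ω = c} = 0)
    (hindep : IndepFun (fun ω => (X ω, Y ω)) (fun ω => fun j => G j ω) Pr) :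
    Pr (symmDiff
        {ω | transport m N β (fun i => S i ω) (fun j => G j ω) (s (X ω) (Y ω))
          ≤ synthQuantile N (fun j => G j ω) α}
        {ω | ((s (X ω) (Y ω) : ℝ) : EReal)
          ≤ fastThreshold m N β α (fun i => S i ω) (fun j => G j ω)}) = 0 := by
  have hD : MeasurableSet {p : ℝ × (Fin N → ℝ) | ∃ j, p.2 j = p.1} := by
    simp only [Set.ofPred_exists]
    exact .iUnion fun j =>
      measurableSet_eq_fun ((measurable_pi_apply j).comp measurable_snd) measurable_fst
  have hties : Pr {ω | ∃ j, G j ω = s (X ω) (Y ω)} = 0 :=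
    (hindep.comp hs measurable_id).measure_preimage_eq_zero (hs.comp (hX.prodMk hY))
      (measurable_pi_lambda _ hGmeas) hD fun z => hGnoatom z
  refine measure_mono_null (fun ω hω => ?_) (measure_union_null (ae_iff.1 hGdistinct) hties)
  by_contra hgood
  simp only [Set.mem_union, Set.mem_ofPred_eq, not_or, not_not, not_exists] at hgood
  have := transport_le_synthQuantile_iff (fun i => S i ω) (fun j => G j ω) (s (X ω) (Y ω))
    hα.1.le hα.2 hβ.1.le hβ.2 hgood.1 hgood.2
  rw [Set.mem_symmDiff, Set.mem_ofPred_eq, Set.mem_ofPred_eq, this] at hω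
  tauto

/-- Proposition 1: the SPI prediction set `Ĉ` and the fast prediction set
`Ĉ^fast` agree almost surely: the symmetric difference of the two coverage events for a test
point `(X_{m+1}, Y_{m+1})` is a null event, provided the synthetic scores are almost surely
pairwise distinct and almost surely avoid any fixed value (continuous marginals), and are
independent of the test point. -/
theorem spi_fast_prediction_set_equivalence
    {Ω 𝒳 𝒴 : Type*} [MeasurableSpace Ω] [MeasurableSpace 𝒳] [MeasurableSpace 𝒴]
    (Pr : MeasureTheory.Measure Ω) [IsProbabilityMeasure Pr]
    (m N : ℕ) (hm : 0 < m) (hN : 0 < N)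
    (α β : ℝ) (hα : α ∈ Set.Ioo (0 : ℝ) 1) (hβ : β ∈ Set.Ioo (0 : ℝ) 1)
    (s : 𝒳 → 𝒴 → ℝ) (hs : Measurable fun p : 𝒳 × 𝒴 => s p.1 p.2)
    (S : Fin m → Ω → ℝ) (G : Fin N → Ω → ℝ) (hGmeas : ∀ j, Measurable (G j))
    (X : Ω → 𝒳) (Y : Ω → 𝒴) (hX : Measurable X) (hY : Measurable Y)
    (hGdistinct : ∀ᵐ ω ∂Pr, Function.Injective fun j => G j ω)
    (hGnoatom : ∀ c : ℝ, Pr {ω | ∃ j, G j ω = c} = 0)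
    (hindep : IndepFun (fun ω => (X ω, Y ω)) (fun ω => fun j => G j ω) Pr) :
    Pr (symmDiff
        {ω | transport m N β (fun i => S i ω) (fun j => G j ω) (s (X ω) (Y ω))
          ≤ synthQuantile N (fun j => G j ω) α}
        {ω | ((s (X ω) (Y ω) : ℝ) : EReal)
          ≤ fastThreshold m N β α (fun i => S i ω) (fun j => G j ω)}) = 0 :=
  spi_fast_prediction_set_equivalence_general Pr m N α β hα hβ s hs S G hGmeas X Y hX hY hGdistinct
    hGnoatom hindep
end

section
/- Let m be a positive integer and let Z_1,…,Z_{m+1} be real random variables whose joint distribution is exchangeable (invariant under every permutation of the coordinates) and which are almost surely pairwise distinct. Define the rank r_{m+1} = 1 + #{ i ∈ {1,…,m} : Z_i < Z_{m+1} }. Then r_{m+1} is uniformly distributed on {1,…,m+1}, and moreover r_{m+1} is independent of the order statistics (Z_{(1)},…,Z_{(m+1)}). -/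
open MeasureTheory ProbabilityTheory Finset

theorem orderStat_comp_perm {n : ℕ} (f : Fin n → ℝ) (σ : Equiv.Perm (Fin n)) :
    orderStat (f ∘ σ) = orderStat f :=
  Tuple.comp_perm_comp_sort_eq_comp_sort (f := f) (σ := σ)

theorem measurable_finset_sup' {α ι : Type*} [MeasurableSpace α] (s : Finset ι)
    (hs : s.Nonempty) (g : ι → α → ℝ) (hg : ∀ i, Measurable (g i)) :
    Measurable fun a => s.sup' hs fun i => g i a := by
  induction hs using Finset.Nonempty.cons_induction with
  | singleton i => simp only [Finset.sup'_singleton, Finset.inf'_singleton]; exact hg i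
  | cons i s hi hs ih => simp only [Finset.sup'_cons hs]; exact (hg i).max ih

theorem measurable_finset_inf' {α ι : Type*} [MeasurableSpace α] (s : Finset ι)
    (hs : s.Nonempty) (g : ι → α → ℝ) (hg : ∀ i, Measurable (g i)) :
    Measurable fun a => s.inf' hs fun i => g i a := by
  induction hs using Finset.Nonempty.cons_induction with
  | singleton i => simp only [Finset.sup'_singleton, Finset.inf'_singleton]; exact hg i
  | cons i s hi hs ih => simp only [Finset.inf'_cons hs]; exact (hg i).min ih

/-- helper sup with junk value on empty sets -/
noncomputable def msup {n : ℕ} (s : Finset (Fin n)) (f : Fin n → ℝ) : ℝ :=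
  if h : s.Nonempty then s.sup' h f else 0

theorem measurable_msup {n : ℕ} (s : Finset (Fin n)) : Measurable (msup s) := by
  unfold msup
  split
  · exact measurable_finset_sup' s ‹_› (fun (i : Fin n) (f : Fin n → ℝ) => f i) fun i => measurable_pi_apply i
  · exact measurable_const

theorem orderStat_eq_inf' {n : ℕ} (f : Fin n → ℝ) (k : Fin n) :
    orderStat f k = (Finset.univ.powersetCard (k.1 + 1)).inf'
      (Finset.powersetCard_nonempty.2 (by simp only [Finset.card_univ, Fintype.card_fin]; omega)) (fun s => msup s f) := by
  set σ := Tuple.sort f with hσ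
  have hmono : Monotone (f ∘ σ) := Tuple.monotone_sort f
  apply le_antisymm
  · apply Finset.le_inf'
    intro s hs
    rw [Finset.mem_powersetCard] at hs
    have hne : s.Nonempty := Finset.card_pos.1 (by omega)
    have hex : ∃ j ∈ s, k ≤ σ.symm j := by
      by_contra hcon
      push_neg at hcon
      have hmaps : ∀ j ∈ s, σ.symm j ∈ Finset.Iio k := fun j hj => by
        simpa using hcon j hj
      have := Finset.card_le_card_of_injOn (fun j => σ.symm j) hmaps
        (fun a _ b _ h => σ.symm.injective h)
      rw [Fin.card_Iio] at this
      omega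
    obtain ⟨j, hj, hkj⟩ := hex
    have h1 : orderStat f k ≤ f j := by
      have := hmono hkj
      simpa [orderStat] using this
    calc orderStat f k ≤ f j := h1
      _ ≤ msup s f := by
          rw [msup, dif_pos hne]; exact Finset.le_sup' f hj
  · have hmem : (Finset.Iic k).image σ ∈ Finset.univ.powersetCard (k.1 + 1) := by
      rw [Finset.mem_powersetCard]
      refine ⟨Finset.subset_univ _, ?_⟩
      rw [Finset.card_image_of_injective _ σ.injective, Fin.card_Iic]
    refine le_trans (Finset.inf'_le _ hmem) ?_
    have hne : ((Finset.Iic k).image σ).Nonempty :=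
      ⟨σ k, Finset.mem_image_of_mem σ (Finset.mem_Iic.2 le_rfl)⟩
    rw [msup, dif_pos hne, Finset.sup'_image]
    apply Finset.sup'_le
    · intro j hj
      exact hmono (Finset.mem_Iic.1 hj)

theorem measurable_orderStat {n : ℕ} : Measurable fun f : Fin n → ℝ => orderStat f := by
  apply measurable_pi_lambda
  intro k
  simp only [orderStat_eq_inf' (k := k)]
  exact measurable_finset_inf' _ _ (fun s f => msup s f) fun s => measurable_msup s

/-- the rank of coordinate `j` within the tuple `f` -/
noncomputable def posIdx {n : ℕ} (f : Fin n → ℝ) (j : Fin n) : ℕ :=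
  1 + (Finset.univ.filter fun i => f i < f j).card

theorem rankOf_eq_posIdx {m : ℕ} (f : Fin (m + 1) → ℝ) :
    rankOf m (fun i : Fin m => f i.castSucc) (f (Fin.last m)) = posIdx f (Fin.last m) := by
  unfold rankOf posIdx
  congr 1
  rw [Finset.card_filter, Finset.card_filter, Fin.sum_univ_castSucc]
  simp

theorem posIdx_comp_perm {n : ℕ} (f : Fin n → ℝ) (σ : Equiv.Perm (Fin n)) (j : Fin n) :
    posIdx (f ∘ σ) j = posIdx f (σ j) := by
  unfold posIdx
  simp only [Function.comp_apply]
  congr 1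
  rw [Finset.card_filter, Finset.card_filter]
  exact Equiv.sum_comp σ (fun i => if f i < f (σ j) then 1 else 0)

theorem one_le_posIdx {n : ℕ} (f : Fin n → ℝ) (j : Fin n) : 1 ≤ posIdx f j :=
  Nat.le_add_right 1 _

theorem posIdx_le {n : ℕ} (f : Fin n → ℝ) (j : Fin n) : posIdx f j ≤ n := by
  unfold posIdx
  have h : (Finset.univ.filter fun i => f i < f j) ⊆ Finset.univ.erase j := by
    intro i hi
    rw [Finset.mem_erase]
    refine ⟨?_, Finset.mem_univ i⟩
    rintro rfl
    exact absurd (Finset.mem_filter.1 hi).2 (lt_irrefl _)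
  have h2 := Finset.card_le_card h
  rw [Finset.card_erase_of_mem (Finset.mem_univ j), Finset.card_univ, Fintype.card_fin] at h2
  have := j.2
  omega

theorem posIdx_lt_of_lt {n : ℕ} {f : Fin n → ℝ} {j j' : Fin n} (h : f j < f j') :
    posIdx f j < posIdx f j' := by
  unfold posIdx
  have hsub : (Finset.univ.filter fun i => f i < f j) ⊆ (Finset.univ.filter fun i => f i < f j') :=
    fun i hi => Finset.mem_filter.2 ⟨Finset.mem_univ _, lt_trans (Finset.mem_filter.1 hi).2 h⟩
  have hss : (Finset.univ.filter fun i => f i < f j) ⊂ (Finset.univ.filter fun i => f i < f j') := by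
    rw [Finset.ssubset_iff_of_subset hsub]
    exact ⟨j, Finset.mem_filter.2 ⟨Finset.mem_univ _, h⟩,
      fun hc => absurd (Finset.mem_filter.1 hc).2 (lt_irrefl _)⟩
  have := Finset.card_lt_card hss
  omega

theorem posIdx_injective {n : ℕ} {f : Fin n → ℝ} (hf : Function.Injective f) :
    Function.Injective (posIdx f) := by
  intro j j' h
  rcases lt_trichotomy (f j) (f j') with hlt | heq | hgt
  · exact absurd h (Nat.ne_of_lt (posIdx_lt_of_lt hlt))
  · exact hf heq
  · exact absurd h.symm (Nat.ne_of_lt (posIdx_lt_of_lt hgt))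

theorem posIdx_surj {n : ℕ} {f : Fin n → ℝ} (hf : Function.Injective f)
    {k : ℕ} (hk1 : 1 ≤ k) (hk2 : k ≤ n) : ∃ j, posIdx f j = k := by
  have hn : 0 < n := lt_of_lt_of_le hk1 hk2
  set g : Fin n → Fin n := fun j => ⟨posIdx f j - 1, by
    have h1 := posIdx_le f j; have h2 := one_le_posIdx f j; omega⟩ with hg
  have hginj : Function.Injective g := by
    intro a b hab
    apply posIdx_injective hf
    have := congrArg Fin.val hab
    simp only [hg] at this
    have ha := one_le_posIdx f a
    have hb := one_le_posIdx f b
    omega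
  obtain ⟨j, hj⟩ := (Finite.injective_iff_surjective.1 hginj) ⟨k - 1, by omega⟩
  refine ⟨j, ?_⟩
  have := congrArg Fin.val hj
  simp only [hg] at this
  have := one_le_posIdx f j
  omega

theorem measurable_posIdx {n : ℕ} (j : Fin n) :
    Measurable fun f : Fin n → ℝ => posIdx f j := by
  unfold posIdx
  simp_rw [Finset.card_filter]
  exact measurable_const.add (Finset.measurable_sum _ fun i _ =>
    Measurable.ite (measurableSet_lt (measurable_pi_apply i) (measurable_pi_apply j))
      measurable_const measurable_const)

theorem measurableSet_injective {n : ℕ} :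
    MeasurableSet {f : Fin n → ℝ | Function.Injective f} := by
  have h : {f : Fin n → ℝ | Function.Injective f}
      = ⋂ (i) (j) (_ : i ≠ j), {f : Fin n → ℝ | f i = f j}ᶜ := by
    ext f
    simp only [Set.mem_iInter, Set.mem_setOf_eq, Set.mem_compl_iff]
    constructor
    · intro h i j hij he
      exact hij (h he)
    · intro h a b hab
      by_contra hne
      exact h a b hne hab
  rw [h]
  exact MeasurableSet.iInter fun i => MeasurableSet.iInter fun j =>
    MeasurableSet.iInter fun _ =>
      (measurableSet_eq_fun (measurable_pi_apply i) (measurable_pi_apply j)).compl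

theorem measurable_orderStat_mem {n : ℕ} {t : Set (Fin n → ℝ)} (ht : MeasurableSet t) :
    MeasurableSet {f : Fin n → ℝ | orderStat f ∈ t} :=
  measurable_orderStat ht

theorem key_measure {m : ℕ} (μ : Measure (Fin (m + 1) → ℝ)) [IsProbabilityMeasure μ]
    (hexch : ∀ σ : Equiv.Perm (Fin (m + 1)), μ.map (fun f => f ∘ σ) = μ)
    (hinj : ∀ᵐ f ∂μ, Function.Injective f)
    {k : ℕ} (hk1 : 1 ≤ k) (hk2 : k ≤ m + 1) {t : Set (Fin (m + 1) → ℝ)}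
    (ht : MeasurableSet t) :
    μ {f | posIdx f (Fin.last m) = k ∧ orderStat f ∈ t}
      = μ {f | orderStat f ∈ t} / ((m : ENNReal) + 1) := by
  set A : Fin (m + 1) → Set (Fin (m + 1) → ℝ) :=
    fun j => {f | posIdx f j = k ∧ orderStat f ∈ t} with hA
  have hAmeas : ∀ j, MeasurableSet (A j) := fun j =>
    ((measurable_posIdx j) (MeasurableSet.singleton k)).inter (measurable_orderStat_mem ht)
  -- each A j has the same measure as A (last)
  have hsame : ∀ j, μ (A j) = μ (A (Fin.last m)) := by
    intro j
    set σ : Equiv.Perm (Fin (m + 1)) := Equiv.swap j (Fin.last m) with hσ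
    have hmeasσ : Measurable fun f : Fin (m + 1) → ℝ => f ∘ σ :=
      measurable_pi_lambda _ fun i => measurable_pi_apply (σ i)
    have h1 : μ (A j) = (μ.map (fun f => f ∘ σ)) (A j) := by rw [hexch]
    rw [h1, Measure.map_apply hmeasσ (hAmeas j)]
    congr 1
    ext f
    simp only [hA, Set.mem_preimage, Set.mem_setOf_eq, posIdx_comp_perm, orderStat_comp_perm]
    rw [hσ, Equiv.swap_apply_left]
  set I : Set (Fin (m + 1) → ℝ) := {f | Function.Injective f} with hI
  have hImeas : MeasurableSet I := measurableSet_injective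
  have hInull : μ Iᶜ = 0 := by
    rw [MeasureTheory.ae_iff] at hinj
    rw [hI, Set.compl_setOf]
    exact hinj
  have hinter : ∀ (B : Set (Fin (m + 1) → ℝ)), μ (B ∩ I) = μ B := by
    intro B
    exact MeasureTheory.measure_inter_conull hInull
  -- the A j ∩ I are pairwise disjoint and cover {orderStat ∈ t} ∩ I
  have hdisj : Pairwise (Function.onFun Disjoint fun j => A j ∩ I) := by
    intro j j' hjj'
    rw [Function.onFun, Set.disjoint_left]
    rintro f ⟨hf1, hf2⟩ ⟨hg1, hg2⟩
    exact hjj' (posIdx_injective hf2 (hf1.1.trans hg1.1.symm))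
  have hcover : (⋃ j, A j ∩ I) = {f | orderStat f ∈ t} ∩ I := by
    ext f
    simp only [Set.mem_iUnion, Set.mem_inter_iff, hA, Set.mem_setOf_eq, hI]
    constructor
    · rintro ⟨j, ⟨_, hot⟩, hfi⟩
      exact ⟨hot, hfi⟩
    · rintro ⟨hot, hfi⟩
      obtain ⟨j, hj⟩ := posIdx_surj hfi hk1 hk2
      exact ⟨j, ⟨hj, hot⟩, hfi⟩
  have hsum : ∑ j : Fin (m + 1), μ (A j ∩ I) = μ {f | orderStat f ∈ t} := by
    rw [← hinter {f | orderStat f ∈ t}, ← hcover,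
      MeasureTheory.measure_iUnion hdisj fun j => (hAmeas j).inter hImeas]
    exact (tsum_fintype _).symm
  have hconst : ∀ j, μ (A j ∩ I) = μ (A (Fin.last m)) := fun j => (hinter (A j)).trans (hsame j)
  rw [Finset.sum_congr rfl fun j _ => hconst j, Finset.sum_const, Finset.card_univ,
    Fintype.card_fin, nsmul_eq_mul] at hsum
  rw [ENNReal.eq_div_iff (by simp) (by simp)]
  rw [← hsum]
  norm_num
  rfl

/-- for an exchangeable, almost surely pairwise distinct family
`Z_1,…,Z_{m+1}`, the rank `r_{m+1} = 1 + #{i ≤ m : Z_i < Z_{m+1}}` is uniform on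
`{1,…,m+1}` and independent of the order statistics `(Z_{(1)},…,Z_{(m+1)})`. -/
theorem rank_uniform_and_indep_orderStats
    {Ω : Type*} [MeasurableSpace Ω] (Pr : MeasureTheory.Measure Ω) [IsProbabilityMeasure Pr]
    (m : ℕ) (hm : 0 < m) (Z : Fin (m + 1) → Ω → ℝ)
    (hmeas : ∀ i, Measurable (Z i))
    (hexch : ∀ σ : Equiv.Perm (Fin (m + 1)),
      Pr.map (fun ω => fun i => Z (σ i) ω) = Pr.map (fun ω => fun i => Z i ω))
    (hdistinct : ∀ᵐ ω ∂Pr, Function.Injective fun i => Z i ω) :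
    (∀ k : ℕ, 1 ≤ k → k ≤ m + 1 →
        Pr {ω | rankOf m (fun i : Fin m => Z i.castSucc ω) (Z (Fin.last m) ω) = k}
          = 1 / ((m : ENNReal) + 1)) ∧
      IndepFun (fun ω => rankOf m (fun i : Fin m => Z i.castSucc ω) (Z (Fin.last m) ω))
        (fun ω => orderStat fun i => Z i ω) Pr := by
  classical
  set W : Ω → (Fin (m + 1) → ℝ) := fun ω i => Z i ω with hWdef
  have hWmeas : Measurable W := measurable_pi_lambda _ fun i => hmeas i
  set μ : Measure (Fin (m + 1) → ℝ) := Pr.map W with hμ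
  have hprob : IsProbabilityMeasure μ := Measure.isProbabilityMeasure_map hWmeas.aemeasurable
  have hexch' : ∀ σ : Equiv.Perm (Fin (m + 1)), μ.map (fun f => f ∘ σ) = μ := by
    intro σ
    have hg : Measurable fun f : Fin (m + 1) → ℝ => f ∘ σ :=
      measurable_pi_lambda _ fun i => measurable_pi_apply (σ i)
    rw [hμ, Measure.map_map hg hWmeas]
    have hh : ((fun f : Fin (m + 1) → ℝ => f ∘ σ) ∘ W) = fun ω => fun i => Z (σ i) ω := rfl
    rw [hh, hexch σ]
  have hinj' : ∀ᵐ f ∂μ, Function.Injective f := by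
    rw [hμ, MeasureTheory.ae_map_iff hWmeas.aemeasurable measurableSet_injective]
    exact hdistinct
  have hrank : ∀ ω, rankOf m (fun i : Fin m => Z i.castSucc ω) (Z (Fin.last m) ω)
      = posIdx (W ω) (Fin.last m) := fun ω => rankOf_eq_posIdx (W ω)
  -- main computation
  have hmain : ∀ (s : Set ℕ) (t : Set (Fin (m + 1) → ℝ)), MeasurableSet t →
      Pr ((fun ω => rankOf m (fun i : Fin m => Z i.castSucc ω) (Z (Fin.last m) ω)) ⁻¹' s
          ∩ (fun ω => orderStat fun i => Z i ω) ⁻¹' t)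
        = (Set.ncard (s ∩ Set.Icc 1 (m + 1)) : ENNReal)
            * (μ {f | orderStat f ∈ t} / ((m : ENNReal) + 1)) := by
    intro s t ht
    set K : Finset ℕ := (Finset.Icc 1 (m + 1)).filter (· ∈ s) with hK
    set B : ℕ → Set (Fin (m + 1) → ℝ) :=
      fun k => {f | posIdx f (Fin.last m) = k ∧ orderStat f ∈ t} with hB
    have hBmeas : ∀ k, MeasurableSet (B k) := fun k =>
      ((measurable_posIdx (Fin.last m)) (MeasurableSet.singleton k)).inter
        (measurable_orderStat_mem ht)
    have hpre : (fun ω => rankOf m (fun i : Fin m => Z i.castSucc ω) (Z (Fin.last m) ω)) ⁻¹' s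
        ∩ (fun ω => orderStat fun i => Z i ω) ⁻¹' t = W ⁻¹' (⋃ k ∈ K, B k) := by
      ext ω
      simp only [Set.mem_inter_iff, Set.mem_preimage, Set.mem_iUnion, hB, Set.mem_setOf_eq,
        hK, Finset.mem_filter, Finset.mem_Icc, hrank ω]
      constructor
      · rintro ⟨h1, h2⟩
        exact ⟨posIdx (W ω) (Fin.last m),
          ⟨⟨one_le_posIdx _ _, posIdx_le _ _⟩, h1⟩, rfl, h2⟩
      · rintro ⟨k, ⟨_, hks⟩, hk, h2⟩
        exact ⟨hk ▸ hks, h2⟩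
    rw [hpre, ← Measure.map_apply hWmeas
      (K.measurableSet_biUnion fun k _ => hBmeas k), ← hμ]
    rw [measure_biUnion_finset ?hd fun k _ => hBmeas k]
    case hd =>
      intro k hk k' hk' hkk'
      rw [Function.onFun, Set.disjoint_left]
      rintro f ⟨h1, _⟩ ⟨h2, _⟩
      exact hkk' (h1 ▸ h2 ▸ rfl)
    rw [Finset.sum_congr rfl fun k hk => key_measure μ hexch' hinj'
        (Finset.mem_Icc.1 (Finset.mem_filter.1 hk).1).1
        (Finset.mem_Icc.1 (Finset.mem_filter.1 hk).1).2 ht]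
    rw [Finset.sum_const, nsmul_eq_mul]
    congr 1
    have hKs : (K : Set ℕ) = s ∩ Set.Icc 1 (m + 1) := by
      ext a
      simp only [hK, Finset.coe_filter, Finset.mem_Icc, Set.mem_setOf_eq, Set.mem_inter_iff,
        Set.mem_Icc]
      tauto
    rw [← Set.ncard_coe_finset, hKs]
  have huniv : μ {f | orderStat f ∈ (Set.univ : Set (Fin (m + 1) → ℝ))} = 1 := by
    simp
  constructor
  · intro k hk1 hk2
    have h := hmain {k} Set.univ MeasurableSet.univ
    have hfilter : Set.ncard (({k} : Set ℕ) ∩ Set.Icc 1 (m + 1)) = 1 := by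
      rw [Set.inter_eq_self_of_subset_left (by simp [Set.mem_Icc, hk1, hk2]),
        Set.ncard_singleton]
    rw [hfilter, huniv] at h
    have hset : (fun ω => rankOf m (fun i : Fin m => Z i.castSucc ω) (Z (Fin.last m) ω)) ⁻¹'
          ({k} : Set ℕ) ∩ (fun ω => orderStat fun i => Z i ω) ⁻¹' Set.univ
        = {ω | rankOf m (fun i : Fin m => Z i.castSucc ω) (Z (Fin.last m) ω) = k} := by
      ext ω; simp
    rw [hset] at h
    rw [h]
    simp [ENNReal.div_eq_inv_mul]
  · rw [ProbabilityTheory.indepFun_iff_measure_inter_preimage_eq_mul]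
    intro s t _ ht
    rw [hmain s t ht]
    have h1 : Pr ((fun ω => rankOf m (fun i : Fin m => Z i.castSucc ω) (Z (Fin.last m) ω)) ⁻¹' s)
        = (Set.ncard (s ∩ Set.Icc 1 (m + 1)) : ENNReal) * (1 / ((m : ENNReal) + 1)) := by
      have h := hmain s Set.univ MeasurableSet.univ
      rw [huniv] at h
      rw [← h]
      congr 1
      ext ω; simp
    have h2 : Pr ((fun ω => orderStat fun i => Z i ω) ⁻¹' t) = μ {f | orderStat f ∈ t} := by
      have : (fun ω => orderStat fun i => Z i ω) ⁻¹' t = W ⁻¹' {f | orderStat f ∈ t} := rfl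
      rw [this, hμ, Measure.map_apply hWmeas (measurable_orderStat_mem ht)]
    rw [h1, h2]
    rw [ENNReal.div_eq_inv_mul, ENNReal.div_eq_inv_mul]
    ring
end

section
/- Let m be a positive integer, α ∈ (0,1), and let S_1,…,S_{m+1} be real random variables whose joint distribution is exchangeable and which are almost surely pairwise distinct. Let Q̂_{1−α} be the ⌈(1−α)(m+1)⌉-th smallest value among S_1,…,S_m, with the convention Q̂_{1−α} = +∞ if ⌈(1−α)(m+1)⌉ = m+1. Then 1 − α ≤ P( S_{m+1} ≤ Q̂_{1−α} ) ≤ 1 − α + 1/(m+1). -/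
open MeasureTheory ProbabilityTheory Finset

namespace SCC

/-- number of coordinates ≤ the i-th coordinate -/
noncomputable def cnt (n : ℕ) (i : Fin n) (v : Fin n → ℝ) : ℕ :=
  (Finset.univ.filter fun l => v l ≤ v i).card

lemma cnt_measurable (n : ℕ) (i : Fin n) : Measurable (cnt n i) := by
  have : cnt n i = fun v => ∑ l : Fin n, if v l ≤ v i then 1 else 0 := by
    funext v; rw [cnt, Finset.card_filter]
  rw [this]
  exact Finset.measurable_sum _ fun l _ =>
    Measurable.ite (measurableSet_le (measurable_pi_apply l) (measurable_pi_apply i))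
      measurable_const measurable_const

lemma cnt_perm (n : ℕ) (σ : Equiv.Perm (Fin n)) (i : Fin n) (v : Fin n → ℝ) :
    cnt n i (fun l => v (σ l)) = cnt n (σ i) v := by
  simp only [cnt, Finset.card_filter]
  exact Fintype.sum_equiv σ _ _ (fun l => rfl)

lemma cnt_mem_Icc (n : ℕ) (i : Fin n) (v : Fin n → ℝ) : cnt n i v ∈ Finset.Icc 1 n := by
  simp only [Finset.mem_Icc, cnt]
  constructor
  · exact Finset.card_pos.mpr ⟨i, by simp⟩
  · calc (Finset.univ.filter fun l => v l ≤ v i).card ≤ (Finset.univ : Finset (Fin n)).card :=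
        Finset.card_filter_le _ _
      _ = n := by simp

lemma cnt_injective {n : ℕ} (v : Fin n → ℝ) (hv : Function.Injective v) :
    Function.Injective fun i => cnt n i v := by
  intro i j hij
  simp only [] at hij
  by_contra hne
  have hvne : v i ≠ v j := fun h => hne (hv h)
  rcases lt_or_gt_of_ne hvne with h | h
  · have : cnt n i v < cnt n j v := by
      apply Finset.card_lt_card
      constructor
      · intro l hl
        simp only [Finset.mem_filter] at *
        exact ⟨hl.1, hl.2.trans h.le⟩
      · intro hsub
        have := hsub (by simp : j ∈ Finset.univ.filter fun l => v l ≤ v j)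
        simp only [Finset.mem_filter] at this
        exact absurd this.2 (not_le.mpr h)
    omega
  · have : cnt n j v < cnt n i v := by
      apply Finset.card_lt_card
      constructor
      · intro l hl
        simp only [Finset.mem_filter] at *
        exact ⟨hl.1, hl.2.trans h.le⟩
      · intro hsub
        have := hsub (by simp : i ∈ Finset.univ.filter fun l => v l ≤ v i)
        simp only [Finset.mem_filter] at this
        exact absurd this.2 (not_le.mpr h)
    omega

lemma card_cnt_le {n : ℕ} (v : Fin n → ℝ) (hv : Function.Injective v) (k : ℕ) (hk : k ≤ n) :
    (Finset.univ.filter fun i => cnt n i v ≤ k).card = k := by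
  have hinj := cnt_injective v hv
  have himg : Finset.univ.image (fun i => cnt n i v) = Finset.Icc 1 n := by
    apply Finset.eq_of_subset_of_card_le
    · intro x hx
      simp only [Finset.mem_image] at hx
      obtain ⟨i, _, rfl⟩ := hx
      exact cnt_mem_Icc n i v
    · rw [Finset.card_image_of_injective _ hinj]
      simp [Nat.card_Icc]
  have hflt := Finset.filter_image (f := fun i => cnt n i v) (p := fun x => x ≤ k) (s := Finset.univ)
  have hcard : ((Finset.univ.filter fun i => cnt n i v ≤ k).image fun i => cnt n i v).card
      = (Finset.univ.filter fun i => cnt n i v ≤ k).card :=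
    Finset.card_image_of_injective _ hinj
  rw [← hcard, ← hflt, himg]
  rw [show (Finset.Icc 1 n).filter (fun x => x ≤ k) = Finset.Icc 1 k by
    ext x; simp only [Finset.mem_filter, Finset.mem_Icc]; omega]
  simp [Nat.card_Icc]

lemma le_orderStat_iff {n : ℕ} (f : Fin n → ℝ) (hf : Function.Injective f)
    (η : ℝ) (j : Fin n) :
    η ≤ orderStat f j ↔ (Finset.univ.filter fun i => f i < η).card ≤ (j : ℕ) := by
  set g := orderStat f with hg
  have hmono : StrictMono g :=
    (Tuple.monotone_sort f).strictMono_of_injective (hf.comp (Tuple.sort f).injective)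
  have hcard : (Finset.univ.filter fun i => f i < η).card
      = (Finset.univ.filter fun i => g i < η).card := by
    simp only [Finset.card_filter]
    exact (Fintype.sum_equiv (Tuple.sort f) _ _ (fun l => rfl)).symm
  rw [hcard]
  constructor
  · intro h
    calc (Finset.univ.filter fun i => g i < η).card ≤ (Finset.Iio j).card := by
          apply Finset.card_le_card
          intro i hi
          simp only [Finset.mem_filter] at hi
          rw [Finset.mem_Iio]
          exact hmono.lt_iff_lt.mp (lt_of_lt_of_le hi.2 h)
      _ = (j : ℕ) := Fin.card_Iio j
  · intro h
    by_contra hlt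
    push_neg at hlt
    have hsub : Finset.Iic j ⊆ Finset.univ.filter fun i => g i < η := by
      intro i hi
      rw [Finset.mem_Iic] at hi
      simp only [Finset.mem_filter]
      exact ⟨Finset.mem_univ i, lt_of_le_of_lt (hmono.monotone hi) hlt⟩
    have := Finset.card_le_card hsub
    rw [Fin.card_Iic] at this
    omega

lemma event_iff (m : ℕ) (v : Fin (m+1) → ℝ) (hv : Function.Injective v)
    (k : ℕ) (h1 : 1 ≤ k) (hk : k ≤ m) :
    (((v (Fin.last m) : ℝ) : EReal) ≤ realSorted m (fun i => v i.castSucc) k)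
      ↔ cnt (m+1) (Fin.last m) v ≤ k := by
  have hcond : 1 ≤ k ∧ k ≤ m := ⟨h1, hk⟩
  rw [realSorted, dif_pos hcond, EReal.coe_le_coe_iff]
  have hcalib : Function.Injective fun i : Fin m => v i.castSucc :=
    hv.comp (Fin.castSucc_injective m)
  rw [le_orderStat_iff _ hcalib]
  have hcnt : cnt (m+1) (Fin.last m) v
      = (Finset.univ.filter fun i : Fin m => v i.castSucc < v (Fin.last m)).card + 1 := by
    rw [cnt, Finset.card_filter, Finset.card_filter, Fin.sum_univ_castSucc]
    simp only [le_refl, if_true]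
    congr 1
    apply Finset.sum_congr rfl
    intro i _
    have hne : v i.castSucc ≠ v (Fin.last m) := fun h =>
      absurd (hv h) (Fin.ne_of_lt (Fin.castSucc_lt_last i))
    exact if_congr (hne.le_iff_lt) rfl rfl
  rw [hcnt]
  show _ ≤ (k - 1 : ℕ) ↔ _
  omega

end SCC

/-- split conformal coverage: for exchangeable, almost surely pairwise
distinct scores `S_1,…,S_{m+1}`, with `Q̂_{1−α}` the `⌈(1−α)(m+1)⌉`-th smallest of
`S_1,…,S_m` (`+∞` if the index is `m+1`),
`1−α ≤ P(S_{m+1} ≤ Q̂_{1−α}) ≤ 1−α+1/(m+1)`. -/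
theorem split_conformal_coverage
    {Ω : Type*} [MeasurableSpace Ω] (Pr : MeasureTheory.Measure Ω) [IsProbabilityMeasure Pr]
    (m : ℕ) (hm : 0 < m) (α : ℝ) (hα : α ∈ Set.Ioo (0 : ℝ) 1)
    (S : Fin (m + 1) → Ω → ℝ) (hmeas : ∀ i, Measurable (S i))
    (hexch : ∀ σ : Equiv.Perm (Fin (m + 1)),
      Pr.map (fun ω => fun i => S (σ i) ω) = Pr.map (fun ω => fun i => S i ω))
    (hdistinct : ∀ᵐ ω ∂Pr, Function.Injective fun i => S i ω) :
    1 - α ≤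
        (Pr {ω | ((S (Fin.last m) ω : ℝ) : EReal)
            ≤ realSorted m (fun i : Fin m => S i.castSucc ω)
              ⌈(1 - α) * ((m : ℝ) + 1)⌉₊}).toReal ∧
      (Pr {ω | ((S (Fin.last m) ω : ℝ) : EReal)
            ≤ realSorted m (fun i : Fin m => S i.castSucc ω)
              ⌈(1 - α) * ((m : ℝ) + 1)⌉₊}).toReal
        ≤ 1 - α + 1 / ((m : ℝ) + 1) := by

  classical
  set k := ⌈(1 - α) * ((m : ℝ) + 1)⌉₊ with hkdef
  obtain ⟨hα0, hα1⟩ := hα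
  have hm1 : (0 : ℝ) < (m : ℝ) + 1 := by positivity
  have hk1 : 1 ≤ k := Nat.ceil_pos.mpr (by nlinarith)
  have hk2 : k ≤ m + 1 := by
    rw [hkdef, Nat.ceil_le]
    push_cast
    nlinarith
  by_cases hcase : k ≤ m
  · -- main case: k ≤ m
    set V : Ω → (Fin (m + 1) → ℝ) := fun ω i => S i ω with hV
    have hVmeas : Measurable V := measurable_pi_iff.mpr fun i => hmeas i
    set B : Fin (m + 1) → Set Ω := fun i => {ω | SCC.cnt (m + 1) i (V ω) ≤ k} with hB
    have hBmeas : ∀ i, MeasurableSet (B i) := by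
      intro i
      have : Measurable fun ω => SCC.cnt (m + 1) i (V ω) :=
        (SCC.cnt_measurable (m + 1) i).comp hVmeas
      exact this measurableSet_Iic
    have hBsetmeas : MeasurableSet {v : Fin (m + 1) → ℝ | SCC.cnt (m + 1) (Fin.last m) v ≤ k} :=
      SCC.cnt_measurable (m + 1) (Fin.last m) measurableSet_Iic
    have hBprob : ∀ i, Pr (B i) = Pr (B (Fin.last m)) := by
      intro i
      set σ := Equiv.swap i (Fin.last m) with hσ
      have hσi : σ (Fin.last m) = i := Equiv.swap_apply_right i (Fin.last m)
      have hV'meas : Measurable (fun ω => fun l => S (σ l) ω) :=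
        measurable_pi_iff.mpr fun l => hmeas (σ l)
      have hpre : B i = (fun ω => fun l => S (σ l) ω) ⁻¹'
          {v : Fin (m + 1) → ℝ | SCC.cnt (m + 1) (Fin.last m) v ≤ k} := by
        ext ω
        simp only [hB, Set.mem_preimage, Set.mem_setOf_eq]
        rw [show (fun l => S (σ l) ω) = (fun l => V ω (σ l)) from rfl,
          SCC.cnt_perm (m + 1) σ (Fin.last m) (V ω), hσi]
      rw [hpre, ← Measure.map_apply hV'meas hBsetmeas, hexch σ,
        Measure.map_apply hVmeas hBsetmeas]
      rfl
    have hsum : ∑ i : Fin (m + 1), Pr (B i) = (k : ENNReal) := by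
      have hind : ∀ᵐ ω ∂Pr,
          ∑ i : Fin (m + 1), (B i).indicator (fun _ => (1 : ENNReal)) ω = (k : ENNReal) := by
        filter_upwards [hdistinct] with ω hω
        have hcard : ∑ i : Fin (m + 1), (B i).indicator (fun _ => (1 : ENNReal)) ω
            = ((Finset.univ.filter fun i : Fin (m + 1) =>
                SCC.cnt (m + 1) i (V ω) ≤ k).card : ENNReal) := by
          rw [Finset.card_filter]
          push_cast
          refine Finset.sum_congr rfl fun i _ => ?_
          by_cases h : SCC.cnt (m + 1) i (V ω) ≤ k
          · simp [Set.indicator, hB, h]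
          · simp [Set.indicator, hB, h]
        rw [hcard, SCC.card_cnt_le (V ω) hω k (by omega)]
      calc ∑ i : Fin (m + 1), Pr (B i)
          = ∑ i : Fin (m + 1), ∫⁻ ω, (B i).indicator (fun _ => (1 : ENNReal)) ω ∂Pr := by
            refine Finset.sum_congr rfl fun i _ => ?_
            rw [lintegral_indicator_const (hBmeas i), one_mul]
        _ = ∫⁻ ω, ∑ i : Fin (m + 1), (B i).indicator (fun _ => (1 : ENNReal)) ω ∂Pr :=
            (lintegral_finset_sum _ fun i _ =>
              (measurable_const.indicator (hBmeas i))).symm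
        _ = ∫⁻ _, (k : ENNReal) ∂Pr := lintegral_congr_ae hind
        _ = (k : ENNReal) := by simp
    have hsum2 : ∑ i : Fin (m + 1), Pr (B i) = (m + 1) * Pr (B (Fin.last m)) := by
      rw [Finset.sum_congr rfl fun i _ => hBprob i, Finset.sum_const, Finset.card_univ,
        Fintype.card_fin, nsmul_eq_mul]
      push_cast
      ring
    have hlastval : (Pr (B (Fin.last m))).toReal = (k : ℝ) / ((m : ℝ) + 1) := by
      have hne : Pr (B (Fin.last m)) ≠ ⊤ := measure_ne_top Pr _
      have heq : ((m : ENNReal) + 1) * Pr (B (Fin.last m)) = (k : ENNReal) := by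
        rw [← hsum2, hsum]
      have heq' : (((m + 1 : ℕ) : ENNReal) * Pr (B (Fin.last m))).toReal
          = ((k : ENNReal)).toReal := by
        rw [← heq]; congr 1; push_cast; ring
      rw [ENNReal.toReal_mul, ENNReal.toReal_natCast, ENNReal.toReal_natCast] at heq'
      push_cast at heq'
      field_simp
      linarith [heq']
    have hEea : {ω | ((S (Fin.last m) ω : ℝ) : EReal)
        ≤ realSorted m (fun i : Fin m => S i.castSucc ω) k} =ᵐ[Pr] B (Fin.last m) := by
      filter_upwards [hdistinct] with ω hω
      have := SCC.event_iff m (fun l => S l ω) hω k hk1 hcase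
      simp only [Set.mem_setOf_eq, hB, eq_iff_iff]
      exact this
    have hEval : (Pr {ω | ((S (Fin.last m) ω : ℝ) : EReal)
        ≤ realSorted m (fun i : Fin m => S i.castSucc ω) k}).toReal
        = (k : ℝ) / ((m : ℝ) + 1) := by
      rw [measure_congr hEea, hlastval]
    rw [hEval]
    have hceil1 : (1 - α) * ((m : ℝ) + 1) ≤ (k : ℝ) := Nat.le_ceil _
    have hceil2 : (k : ℝ) < (1 - α) * ((m : ℝ) + 1) + 1 :=
      Nat.ceil_lt_add_one (by nlinarith)
    constructor
    · rw [le_div_iff₀ hm1]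
      linarith
    · rw [div_le_iff₀ hm1]
      have : 1 / ((m : ℝ) + 1) * ((m : ℝ) + 1) = 1 := by field_simp
      nlinarith
  · -- k = m + 1 : quantile is +∞, coverage probability is 1
    have hkeq : k = m + 1 := by omega
    have hset : ∀ ω : Ω, {ω | ((S (Fin.last m) ω : ℝ) : EReal)
        ≤ realSorted m (fun i : Fin m => S i.castSucc ω) k} ω := by
      intro ω
      show _ ≤ realSorted m (fun i : Fin m => S i.castSucc ω) k
      rw [realSorted, dif_neg (by omega), if_pos (by omega)]
      exact le_top
    have huniv : {ω | ((S (Fin.last m) ω : ℝ) : EReal)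
        ≤ realSorted m (fun i : Fin m => S i.castSucc ω) k} = Set.univ := by
      ext ω; simp only [Set.mem_univ, iff_true]; exact hset ω
    rw [huniv, measure_univ, ENNReal.toReal_one]
    have hmk : (m : ℝ) < (1 - α) * ((m : ℝ) + 1) := Nat.lt_ceil.mp (by omega)
    constructor
    · linarith
    · have h1 : α * ((m : ℝ) + 1) < 1 := by nlinarith
      have h2 : α < 1 / ((m : ℝ) + 1) := by rw [lt_div_iff₀ hm1]; linarith
      linarith
end
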